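/- arXiv:1607.03442 — 8 statements merged into one kernel-verified Lean document; each statement's English description precedes it below -/
import Mathlib

section
/- If D = A - A is the difference set of a finite set A of real numbers, then for any d1, d2 in D, the number 2·d1·d2 belongs to the set 2D² - 2D² = {x² + y² - z² - w² : x, y, z, w ∈ D}. Consequently, the dilate 2·(D·D) is contained in 2D² - 2D². -/
open scoped Pointwise

/-- If `D = A - A` is the difference set of a finite set `A` of reals, then for any
`d1, d2 ∈ D` the number `2 * d1 * d2` lies in `2D² - 2D²`, and consequently the
dilate `2 • (D * D)` is contained in `2D² - 2D²`. -/
theorem stmt_0 (A : Finset ℝ) (D : Finset ℝ) (hD : D = A - A) :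
    (∀ d1 ∈ D, ∀ d2 ∈ D, ∃ x ∈ D, ∃ y ∈ D, ∃ z ∈ D, ∃ w ∈ D,
        2 * d1 * d2 = x ^ 2 + y ^ 2 - z ^ 2 - w ^ 2) ∧
    ((2 : ℝ) • (D * D) ⊆ (D.image (· ^ 2) + D.image (· ^ 2))
        - (D.image (· ^ 2) + D.image (· ^ 2))) := by
  subst hD
  have key : ∀ d1 ∈ A - A, ∀ d2 ∈ A - A, ∃ x ∈ A - A, ∃ y ∈ A - A, ∃ z ∈ A - A,
      ∃ w ∈ A - A, 2 * d1 * d2 = x ^ 2 + y ^ 2 - z ^ 2 - w ^ 2 := by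
    intro d1 h1 d2 h2
    rw [Finset.mem_sub] at h1 h2
    obtain ⟨a, ha, b, hb, rfl⟩ := h1
    obtain ⟨c, hc, e, he, rfl⟩ := h2
    refine ⟨a - e, ?_, b - c, ?_, a - c, ?_, b - e, ?_, by ring⟩ <;>
      exact Finset.sub_mem_sub ‹_› ‹_›
  refine ⟨key, ?_⟩
  intro t ht
  rw [Finset.mem_smul_finset] at ht
  obtain ⟨s, hs, rfl⟩ := ht
  rw [Finset.mem_mul] at hs
  obtain ⟨d1, h1, d2, h2, rfl⟩ := hs
  obtain ⟨x, hx, y, hy, z, hz, w, hw, hid⟩ := key d1 h1 d2 h2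
  rw [Finset.mem_sub]
  refine ⟨x ^ 2 + y ^ 2, ?_, z ^ 2 + w ^ 2, ?_, ?_⟩
  · exact Finset.add_mem_add (Finset.mem_image_of_mem _ hx) (Finset.mem_image_of_mem _ hy)
  · exact Finset.add_mem_add (Finset.mem_image_of_mem _ hz) (Finset.mem_image_of_mem _ hw)
  · simp only [smul_eq_mul]; linarith
end

section
/- Let L be a finite collection of lines through the origin in ℝ², all passing through the interior of the first quadrant (i.e., each with positive finite slope), and let P be a finite set of points in the open first quadrant such that each line in L contains at least n points of P. Then |P + P| ≥ (|L| - 1)·n². -/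
/-!
Sort the slopes as `m₀ < m₁ < ⋯ < m_d`. Two distinct lines through the origin span the plane
uniquely, so the sums `a + b` with `a` on line `mᵢ` and `b` on line `mᵢ₊₁` are pairwise distinct:
there are at least `n²` of them. With positive abscissae such a sum has slope strictly between
`mᵢ` and `mᵢ₊₁`, so the `d` families of sums are disjoint subsets of `P + P`.
-/

open scoped Pointwise

open Finset Function

noncomputable def pointsOnLine (P : Finset (ℝ × ℝ)) (m : ℝ) : Finset (ℝ × ℝ) :=
  P.filter fun p => p.2 = m * p.1

theorem mem_pointsOnLine {P : Finset (ℝ × ℝ)} {m : ℝ} {p : ℝ × ℝ} :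
    p ∈ pointsOnLine P m ↔ p ∈ P ∧ p.2 = m * p.1 :=
  mem_filter

theorem eq_and_eq_of_add_eq_add_of_slope_ne {m m' : ℝ} (h : m ≠ m') {a b a' b' : ℝ × ℝ}
    (ha : a.2 = m * a.1) (hb : b.2 = m' * b.1) (ha' : a'.2 = m * a'.1) (hb' : b'.2 = m' * b'.1)
    (hsum : a + b = a' + b') : a = a' ∧ b = b' := by
  obtain ⟨h1, h2⟩ := Prod.ext_iff.1 hsum
  simp only [Prod.fst_add, Prod.snd_add] at h1 h2
  have hfst : a.1 = a'.1 := by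
    have : (m - m') * (a.1 - a'.1) = 0 := by
      linear_combination h2 - m' * h1 - ha + ha' - hb + hb'
    exact sub_eq_zero.1 ((mul_eq_zero.1 this).resolve_left (sub_ne_zero.2 h))
  have hfst' : b.1 = b'.1 := by linarith
  exact ⟨Prod.ext hfst (by rw [ha, ha', hfst]), Prod.ext hfst' (by rw [hb, hb', hfst'])⟩

theorem card_pointsOnLine_add {P : Finset (ℝ × ℝ)} {m m' : ℝ} (h : m ≠ m') :
    #(pointsOnLine P m + pointsOnLine P m') = #(pointsOnLine P m) * #(pointsOnLine P m') := by
  refine card_add_iff.2 ?_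
  rintro ⟨a, b⟩ hab ⟨a', b'⟩ hab' hsum
  simp only [Set.mem_prod, mem_coe, mem_pointsOnLine] at hab hab'
  simpa using eq_and_eq_of_add_eq_add_of_slope_ne h hab.1.2 hab.2.2 hab'.1.2 hab'.2.2 hsum

theorem slope_mem_Ioo_of_mem_pointsOnLine_add {P : Finset (ℝ × ℝ)} (hP : ∀ p ∈ P, 0 < p.1)
    {m m' : ℝ} (h : m < m') {s : ℝ × ℝ} (hs : s ∈ pointsOnLine P m + pointsOnLine P m') :
    s.2 / s.1 ∈ Set.Ioo m m' := by
  obtain ⟨a, ha, b, hb, rfl⟩ := mem_add.1 hs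
  rw [mem_pointsOnLine] at ha hb
  have ha1 := hP a ha.1
  have hb1 := hP b hb.1
  simp only [Prod.fst_add, Prod.snd_add, ha.2, hb.2, Set.mem_Ioo]
  constructor
  · rw [lt_div_iff₀ (by positivity)]; nlinarith
  · rw [div_lt_iff₀ (by positivity)]; nlinarith

theorem sum_card_mul_card_pointsOnLine_le {P : Finset (ℝ × ℝ)} (hP : ∀ p ∈ P, 0 < p.1) {d : ℕ}
    {f : Fin (d + 1) → ℝ} (hf : StrictMono f) :
    ∑ i : Fin d, #(pointsOnLine P (f i.castSucc)) * #(pointsOnLine P (f i.succ)) ≤ #(P + P) := by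
  set S : Fin d → Finset (ℝ × ℝ) := fun i =>
    pointsOnLine P (f i.castSucc) + pointsOnLine P (f i.succ)
  have hS : ∀ i, S i ⊆ P + P := fun i => add_subset_add (filter_subset _ _) (filter_subset _ _)
  have hdisj : Pairwise (Disjoint on S) := by
    rw [pairwise_disjoint_on]
    intro i j hij
    refine disjoint_left.2 fun s hsi hsj => ?_
    have hi := slope_mem_Ioo_of_mem_pointsOnLine_add hP (hf i.castSucc_lt_succ) hsi
    have hj := slope_mem_Ioo_of_mem_pointsOnLine_add hP (hf j.castSucc_lt_succ) hsj
    have hij' : f i.succ ≤ f j.castSucc := hf.monotone (Fin.succ_le_castSucc_iff.2 hij)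
    linarith [hi.2, hj.1]
  calc ∑ i : Fin d, #(pointsOnLine P (f i.castSucc)) * #(pointsOnLine P (f i.succ))
      = ∑ i : Fin d, #(S i) := by
        refine sum_congr rfl fun i _ => (card_pointsOnLine_add ?_).symm
        exact (hf i.castSucc_lt_succ).ne
    _ = #(univ.biUnion S) := (card_biUnion (hdisj.set_pairwise _)).symm
    _ ≤ #(P + P) := card_le_card (biUnion_subset.2 fun i _ => hS i)

theorem stmt_2_general (L : Finset ℝ) (P : Finset (ℝ × ℝ)) (n : ℕ)
    (hP : ∀ p ∈ P, 0 < p.1 ∧ 0 < p.2)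
    (hrich : ∀ m ∈ L, n ≤ (P.filter (fun p => p.2 = m * p.1)).card) :
    (L.card - 1) * n ^ 2 ≤ (P + P).card := by
  obtain hL | ⟨d, hd⟩ : L.card = 0 ∨ ∃ d, L.card = d + 1 := by
    rcases L.card with _ | d <;> simp
  · simp [hL]
  set f := L.orderEmbOfFin hd
  have hrich' : ∀ i, n ≤ #(pointsOnLine P (f i)) := fun i => hrich _ (L.orderEmbOfFin_mem hd i)
  calc (L.card - 1) * n ^ 2 = ∑ _i : Fin d, n * n := by simp [hd, sq]
    _ ≤ ∑ i : Fin d, #(pointsOnLine P (f i.castSucc)) * #(pointsOnLine P (f i.succ)) :=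
        sum_le_sum fun i _ => Nat.mul_le_mul (hrich' _) (hrich' _)
    _ ≤ #(P + P) := sum_card_mul_card_pointsOnLine_le (fun p hp => (hP p hp).1) f.strictMono

/-- Solymosi's lemma: if `L` is a finite set of lines through the origin with positive
slope (represented by their slopes) and `P` is a finite set of points in the open first
quadrant such that every line of `L` contains at least `n` points of `P`, then
`|P + P| ≥ (|L| - 1) * n²`. -/
theorem stmt_2 (L : Finset ℝ) (P : Finset (ℝ × ℝ)) (n : ℕ)
    (hL : ∀ m ∈ L, 0 < m)
    (hP : ∀ p ∈ P, 0 < p.1 ∧ 0 < p.2)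
    (hrich : ∀ m ∈ L, n ≤ (P.filter (fun p => p.2 = m * p.1)).card) :
    (L.card - 1) * n ^ 2 ≤ (P + P).card :=
  stmt_2_general L P n hP hrich
end

section
/- Let S be a finite nonempty set of nonzero real numbers. Then |S·S + S·S|² ≫ |S/S|·|S|², i.e., there is an absolute constant c > 0 such that |S·S + S·S|² ≥ c·|S/S|·|S|². -/
open scoped Pointwise
open Finset

/-- Solymosi's key lemma: rays through the origin, sums of points on consecutive rays. -/
lemma solymosi_key (U D T : Finset ℝ) (aa bb : ℝ → ℝ) (ε : ℝ)
    (hmem : ∀ l ∈ D, ∀ s ∈ T, aa l * s ∈ U ∧ bb l * s ∈ U)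
    (hslope : ∀ l ∈ D, bb l ≠ 0 ∧ aa l / bb l = l)
    (hsign : ∀ l ∈ D, ∀ s ∈ T, 0 < ε * (bb l * s))
    (hD : 2 ≤ D.card) :
    ((D.card : ℝ) - 1) * T.card * T.card ≤ ((U + U).card : ℝ) * ((U + U).card : ℝ) := by
  rcases T.eq_empty_or_nonempty with rfl | hT
  · simp only [card_empty, Nat.cast_zero, mul_zero]
    positivity
  have hε : ε ≠ 0 := by
    have hDne : D.Nonempty := card_pos.mp (by omega)
    obtain ⟨l, hl⟩ := hDne
    obtain ⟨s, hs⟩ := hT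
    intro h
    have := hsign l hl s hs
    rw [h] at this; simp at this
  have hDne : D.Nonempty := card_pos.mp (by omega)
  set M := D.max' hDne with hM
  set D' := D.erase M with hD'
  have hD'card : D'.card = D.card - 1 := card_erase_of_mem (D.max'_mem hDne)
  -- next element function
  set nxt : ℝ → ℝ := fun l =>
    if h : (D.filter fun μ => l < μ).Nonempty then (D.filter fun μ => l < μ).min' h else 0
    with hnxt_def
  have hfilt : ∀ l ∈ D', (D.filter fun μ => l < μ).Nonempty := by
    intro l hl
    exact ⟨M, mem_filter.2 ⟨D.max'_mem hDne,
      lt_of_le_of_ne (D.le_max' l (mem_of_mem_erase hl)) (ne_of_mem_erase hl)⟩⟩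
  have hnxt_mem : ∀ l ∈ D', nxt l ∈ D := by
    intro l hl
    simp only [hnxt_def, dif_pos (hfilt l hl)]
    exact (mem_filter.1 ((D.filter fun μ => l < μ).min'_mem (hfilt l hl))).1
  have hnxt_gt : ∀ l ∈ D', l < nxt l := by
    intro l hl
    simp only [hnxt_def, dif_pos (hfilt l hl)]
    exact (mem_filter.1 ((D.filter fun μ => l < μ).min'_mem (hfilt l hl))).2
  have hnxt_min : ∀ l ∈ D', ∀ μ ∈ D, l < μ → nxt l ≤ μ := by
    intro l hl μ hμ hlt
    simp only [hnxt_def, dif_pos (hfilt l hl)]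
    exact min'_le _ μ (mem_filter.2 ⟨hμ, hlt⟩)
  -- the sum map
  set F : ℝ × ℝ × ℝ → ℝ × ℝ := fun p =>
    (bb p.1 * p.2.1 + bb (nxt p.1) * p.2.2, aa p.1 * p.2.1 + aa (nxt p.1) * p.2.2) with hF
  have hmaps : ∀ p ∈ D' ×ˢ T ×ˢ T, F p ∈ (U + U) ×ˢ (U + U) := by
    rintro ⟨l, s, t⟩ hp
    simp only [mem_product] at hp
    obtain ⟨hl, hs, ht⟩ := hp
    have hlD := mem_of_mem_erase hl
    have hμD := hnxt_mem l hl
    refine mem_product.2 ⟨?_, ?_⟩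
    · exact add_mem_add (hmem l hlD s hs).2 (hmem (nxt l) hμD t ht).2
    · exact add_mem_add (hmem l hlD s hs).1 (hmem (nxt l) hμD t ht).1
  -- slope of the sum point lies strictly between l and nxt l
  have hslope_between : ∀ l ∈ D', ∀ s ∈ T, ∀ t ∈ T,
      l < (aa l * s + aa (nxt l) * t) / (bb l * s + bb (nxt l) * t) ∧
      (aa l * s + aa (nxt l) * t) / (bb l * s + bb (nxt l) * t) < nxt l := by
    intro l hl s hs t ht
    have hlD := mem_of_mem_erase hl
    have hμD := hnxt_mem l hl
    set μ := nxt l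
    have hlt : l < μ := hnxt_gt l hl
    have hx1 : 0 < ε * (bb l * s) := hsign l hlD s hs
    have hx2 : 0 < ε * (bb μ * t) := hsign μ hμD t ht
    set x1 := bb l * s
    set x2 := bb μ * t
    have hXpos : 0 < ε * (x1 + x2) := by nlinarith
    have hX : x1 + x2 ≠ 0 := by
      intro h; rw [h, mul_zero] at hXpos; exact lt_irrefl 0 hXpos
    have hal : aa l = l * bb l := by
      obtain ⟨h1, h2⟩ := hslope l hlD
      field_simp at h2; linarith [h2]
    have haμ : aa μ = μ * bb μ := by
      obtain ⟨h1, h2⟩ := hslope μ hμD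
      field_simp at h2; linarith [h2]
    have hY : aa l * s + aa μ * t = l * x1 + μ * x2 := by
      rw [hal, haμ]; ring
    rw [hY]
    have hfrac1 : x1 / (x1 + x2) = (ε * x1) / (ε * (x1 + x2)) :=
      (mul_div_mul_left x1 (x1 + x2) hε).symm
    have hfrac2 : x2 / (x1 + x2) = (ε * x2) / (ε * (x1 + x2)) :=
      (mul_div_mul_left x2 (x1 + x2) hε).symm
    have hp1 : 0 < x1 / (x1 + x2) := by
      rw [hfrac1]; exact div_pos (by linarith [hx1]) hXpos
    have hp2 : 0 < x2 / (x1 + x2) := by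
      rw [hfrac2]; exact div_pos (by linarith [hx2]) hXpos
    constructor
    · have : (l * x1 + μ * x2) / (x1 + x2) - l = (μ - l) * (x2 / (x1 + x2)) := by
        field_simp
        ring
      nlinarith [mul_pos (sub_pos.2 hlt) hp2]
    · have : μ - (l * x1 + μ * x2) / (x1 + x2) = (μ - l) * (x1 / (x1 + x2)) := by
        field_simp
        ring
      nlinarith [mul_pos (sub_pos.2 hlt) hp1]
  have hinj : Set.InjOn F ↑(D' ×ˢ T ×ˢ T) := by
    rintro ⟨l, s, t⟩ hp ⟨l', s', t'⟩ hp' heq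
    simp only [Finset.mem_coe, Finset.mem_product] at hp hp'
    obtain ⟨hl, hs, ht⟩ := hp
    obtain ⟨hl', hs', ht'⟩ := hp'
    have hE1 : bb l * s + bb (nxt l) * t = bb l' * s' + bb (nxt l') * t' :=
      congrArg Prod.fst heq
    have hE2 : aa l * s + aa (nxt l) * t = aa l' * s' + aa (nxt l') * t' :=
      congrArg Prod.snd heq
    have hb1 := hslope_between l hl s hs t ht
    have hb2 := hslope_between l' hl' s' hs' t' ht'
    rw [hE1, hE2] at hb1
    -- l = l'
    have hll : l = l' := by
      rcases lt_trichotomy l l' with h | h | h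
      · exfalso
        have := hnxt_min l hl l' (mem_of_mem_erase hl') h
        linarith [hb1.2, hb2.1]
      · exact h
      · exfalso
        have := hnxt_min l' hl' l (mem_of_mem_erase hl) h
        linarith [hb1.1, hb2.2]
    subst hll
    rw [← hE1, ← hE2] at hb1
    -- now solve linear system
    have hlD := mem_of_mem_erase hl
    have hμD := hnxt_mem l hl
    set μ := nxt l
    have hlt : l < μ := hnxt_gt l hl
    obtain ⟨hbl, hsl⟩ := hslope l hlD
    obtain ⟨hbμ, hsμ⟩ := hslope μ hμD
    have hal : aa l = l * bb l := by field_simp at hsl; linarith [hsl]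
    have haμ : aa μ = μ * bb μ := by field_simp at hsμ; linarith [hsμ]
    have hE1' : bb l * (s - s') = bb μ * (t' - t) := by linarith [hE1]
    have hE2' : l * (bb l * (s - s')) = μ * (bb μ * (t' - t)) := by
      rw [hal, haμ] at hE2; nlinarith [hE2]
    have hss : s = s' := by
      have h3 : (l - μ) * (bb l * (s - s')) = 0 := by
        rw [hE1'] at hE2' ⊢
        ring_nf
        ring_nf at hE2'
        linarith [hE2']
      have hne : l - μ ≠ 0 := by intro h; linarith
      have := mul_eq_zero.1 h3
      rcases this with h | h
      · exact absurd h hne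
      · rcases mul_eq_zero.1 h with h' | h'
        · exact absurd h' hbl
        · linarith [sub_eq_zero.1 h']
    subst hss
    have htt : t = t' := by
      have : bb μ * (t' - t) = 0 := by rw [← hE1']; ring
      rcases mul_eq_zero.1 this with h | h
      · exact absurd h hbμ
      · linarith [sub_eq_zero.1 h]
    subst htt
    rfl
  have hcard := Finset.card_le_card_of_injOn F hmaps hinj
  rw [Finset.card_product, Finset.card_product, Finset.card_product] at hcard
  have h1 : 1 ≤ D.card := by omega
  have : ((D.card - 1 : ℕ) : ℝ) * T.card * T.card ≤ ((U+U).card : ℝ) * ((U+U).card : ℝ) := by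
    rw [← hD'card]
    exact_mod_cast le_of_eq_of_le (by push_cast; ring) (Nat.cast_le.2 hcard)
  rwa [Nat.cast_sub h1, Nat.cast_one] at this


open Classical in
noncomputable def repPair (S : Finset ℝ) (l : ℝ) : ℝ × ℝ :=
  if h : ∃ p : ℝ × ℝ, p.1 ∈ S ∧ p.2 ∈ S ∧ p.1 / p.2 = l then h.choose else (1, 1)

open Classical in
lemma repPair_spec {S : Finset ℝ} {l : ℝ} (hl : l ∈ S / S) :
    (repPair S l).1 ∈ S ∧ (repPair S l).2 ∈ S ∧ (repPair S l).1 / (repPair S l).2 = l := by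
  rw [Finset.mem_div] at hl
  obtain ⟨a, ha, b, hb, hab⟩ := hl
  have h : ∃ p : ℝ × ℝ, p.1 ∈ S ∧ p.2 ∈ S ∧ p.1 / p.2 = l := ⟨(a, b), ha, hb, hab⟩
  rw [repPair]; rw [dif_pos h]
  exact h.choose_spec

/-- trivial lower bound |SS+SS| ≥ |S| -/
lemma card_le_sumprod (S : Finset ℝ) (hS : S.Nonempty) (h0 : (0:ℝ) ∉ S) :
    S.card ≤ (S * S + S * S).card := by
  obtain ⟨t, ht⟩ := hS
  have htne : t ≠ 0 := fun h => h0 (h ▸ ht)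
  apply Finset.card_le_card_of_injOn (fun s => t * s + t * t)
  · intro s hs
    exact add_mem_add (mul_mem_mul ht hs) (mul_mem_mul ht ht)
  · intro a _ b _ hab
    simp only at hab
    have : t * a = t * b := by linarith
    exact mul_left_cancel₀ htne this

/-- get a large subset of constant sign -/
lemma half_sign (S : Finset ℝ) (h0 : (0:ℝ) ∉ S) :
    ∃ σ : ℝ, σ ≠ 0 ∧ ∃ T : Finset ℝ, T ⊆ S ∧ (∀ s ∈ T, 0 < σ * s) ∧
      S.card ≤ 2 * T.card := by
  set Sp := S.filter (fun x => 0 < x)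
  set Sn := S.filter (fun x => x < 0)
  have hcov : S.card ≤ Sp.card + Sn.card := by
    have : S ⊆ Sp ∪ Sn := by
      intro x hx
      rcases lt_trichotomy 0 x with h | h | h
      · exact mem_union_left _ (mem_filter.2 ⟨hx, h⟩)
      · exact absurd hx (h ▸ h0)
      · exact mem_union_right _ (mem_filter.2 ⟨hx, h⟩)
    calc S.card ≤ (Sp ∪ Sn).card := card_le_card this
      _ ≤ Sp.card + Sn.card := card_union_le _ _
  rcases le_total Sp.card Sn.card with h | h
  · exact ⟨-1, by norm_num, Sn, filter_subset _ _,
      fun s hs => by have := (mem_filter.1 hs).2; linarith, by omega⟩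
  · exact ⟨1, one_ne_zero, Sp, filter_subset _ _,
      fun s hs => by have := (mem_filter.1 hs).2; linarith, by omega⟩

set_option maxHeartbeats 1000000 in
/-- For a finite nonempty set `S` of nonzero reals, `|S·S + S·S|² ≫ |S/S| * |S|²`. -/
theorem stmt_4 :
    ∃ c : ℝ, 0 < c ∧ ∀ S : Finset ℝ, S.Nonempty → (0 : ℝ) ∉ S →
      c * (S / S).card * (S.card : ℝ) ^ 2 ≤ ((S * S + S * S).card : ℝ) ^ 2 := by
  refine ⟨1/32, by norm_num, fun S hS h0 => ?_⟩
  obtain ⟨σ, hσ, T, hTS, hTsign, hTcard⟩ := half_sign S h0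
  set D := S / S with hD
  set aa : ℝ → ℝ := fun l => (repPair S l).1 with haa
  set bb : ℝ → ℝ := fun l => (repPair S l).2 with hbb
  have hbbne : ∀ l ∈ D, bb l ≠ 0 := fun l hl h =>
    h0 (h ▸ (repPair_spec hl).2.1)
  set k : ℝ := ((S * S + S * S).card : ℝ) with hk
  have hk0 : 0 ≤ k := by positivity
  have hn : (S.card : ℝ) ≤ 2 * T.card := by exact_mod_cast hTcard
  have hnk : (S.card : ℝ) ≤ k := by rw [hk]; exact_mod_cast card_le_sumprod S hS h0
  have hm0 : (0:ℝ) ≤ (D.card : ℝ) := by positivity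
  have hn0 : (0:ℝ) ≤ (S.card : ℝ) := by positivity
  have ht0 : (0:ℝ) ≤ (T.card : ℝ) := by positivity
  rcases le_or_gt D.card 3 with hsmall | hbig
  · have hm3 : (D.card : ℝ) ≤ 3 := by exact_mod_cast hsmall
    nlinarith [sq_nonneg (S.card : ℝ), mul_le_mul hnk hnk hn0 hk0]
  -- big case
  · set Dp := D.filter (fun l => 0 < σ * (repPair S l).2) with hDp
    set Dn := D.filter (fun l => σ * (repPair S l).2 < 0) with hDn
    have hcov : D.card ≤ Dp.card + Dn.card := by
      have hsub : D ⊆ Dp ∪ Dn := by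
        intro l hl
        rcases lt_trichotomy 0 (σ * (repPair S l).2) with h | h | h
        · exact mem_union_left _ (mem_filter.2 ⟨hl, h⟩)
        · exfalso
          rcases mul_eq_zero.1 h.symm with h' | h'
          · exact hσ h'
          · exact hbbne l hl h'
        · exact mem_union_right _ (mem_filter.2 ⟨hl, h⟩)
      calc D.card ≤ (Dp ∪ Dn).card := card_le_card hsub
        _ ≤ Dp.card + Dn.card := card_union_le _ _
    -- pick the larger class together with a sign ε
    obtain ⟨D'', ε, hD''sub, hD''card, hsign⟩ :
        ∃ (D'' : Finset ℝ) (ε : ℝ), D'' ⊆ D ∧ D.card ≤ 2 * D''.card ∧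
          ∀ l ∈ D'', ∀ s ∈ T, 0 < ε * (bb l * s) := by
      have hσ2 : 0 < σ * σ := by rcases hσ.lt_or_gt with h | h <;> nlinarith
      rcases le_total Dp.card Dn.card with h | h
      · refine ⟨Dn, -1, filter_subset _ _, by omega, fun l hl s hs => ?_⟩
        have h1 := (mem_filter.1 hl).2
        have h2 := hTsign s hs
        nlinarith
      · refine ⟨Dp, 1, filter_subset _ _, by omega, fun l hl s hs => ?_⟩
        have h1 := (mem_filter.1 hl).2
        have h2 := hTsign s hs
        nlinarith
    have hD''2 : 2 ≤ D''.card := by omega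
    have hkey := solymosi_key (S * S) D'' T aa bb ε
      (fun l hl s hs =>
        ⟨mul_mem_mul (repPair_spec (hD''sub hl)).1 (hTS hs),
         mul_mem_mul (repPair_spec (hD''sub hl)).2.1 (hTS hs)⟩)
      (fun l hl => ⟨hbbne l (hD''sub hl), (repPair_spec (hD''sub hl)).2.2⟩)
      hsign hD''2
    have hd2 : (2:ℝ) ≤ (D''.card : ℝ) := by exact_mod_cast hD''2
    have hmd : (D.card : ℝ) ≤ 2 * (D''.card : ℝ) := by exact_mod_cast hD''card
    set d : ℝ := (D''.card : ℝ)
    set t : ℝ := (T.card : ℝ)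
    set n : ℝ := (S.card : ℝ)
    set m : ℝ := (D.card : ℝ)
    -- (1/32) m n² ≤ (1/4) d t² ≤ (1/2)(d-1) t² ≤ k²
    have hstep1 : (1/32) * m * n^2 ≤ (1/4) * d * t^2 := by
      nlinarith [mul_nonneg (sub_nonneg.2 hn) (by linarith : (0:ℝ) ≤ 2*t + n),
        mul_nonneg (sub_nonneg.2 hmd) (sq_nonneg n), sq_nonneg t]
    have hstep2 : (1/4) * d * t^2 ≤ (d - 1) * t^2 := by nlinarith [sq_nonneg t]
    have : (d - 1) * t * t ≤ k * k := hkey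
    nlinarith [sq_nonneg t]
end

section
/- Let A be a finite set of real numbers with |A| ≥ 2, let D = A - A, and suppose Ungar's theorem (the points A×A determine at least |A|² - 1 distinct directions) holds. Then |D/D| ≥ |A|² - 1, where vertical direction is excluded, giving |D/D| ≫ |A|². -/
open scoped Pointwise

/-- Assuming Ungar's theorem for `A × A` (the points of `A × A` determine at least
`|A|² - 1` distinct non-vertical slopes), the ratio set `D/D` of `D = A - A`
satisfies `|D/D| ≥ |A|² - 1`, and hence `|D/D| ≫ |A|²`. -/
theorem stmt_7 (A : Finset ℝ) (hA : 2 ≤ A.card) (D : Finset ℝ) (hD : D = A - A)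
    (hUngar : A.card ^ 2 - 1 ≤
      ({s : ℝ | ∃ p ∈ A ×ˢ A, ∃ q ∈ A ×ˢ A, p ≠ q ∧ p.1 ≠ q.1 ∧
          s = (p.2 - q.2) / (p.1 - q.1)} : Set ℝ).ncard) :
    A.card ^ 2 - 1 ≤ (Finset.image₂ (· / ·) D (D.filter (fun d => d ≠ 0))).card ∧
    A.card ^ 2 ≤ 2 * (Finset.image₂ (· / ·) D (D.filter (fun d => d ≠ 0))).card := by
  set T := Finset.image₂ (· / ·) D (D.filter (fun d => d ≠ 0)) with hT
  have hsub : ({s : ℝ | ∃ p ∈ A ×ˢ A, ∃ q ∈ A ×ˢ A, p ≠ q ∧ p.1 ≠ q.1 ∧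
      s = (p.2 - q.2) / (p.1 - q.1)} : Set ℝ) ⊆ (T : Set ℝ) := by
    rintro s ⟨p, hp, q, hq, _, hpq1, rfl⟩
    simp only [Finset.mem_product] at hp hq
    simp only [hT, Finset.coe_image₂, Set.mem_image2]
    refine ⟨p.2 - q.2, ?_, p.1 - q.1, ?_, rfl⟩
    · rw [hD]; exact Finset.sub_mem_sub hp.2 hq.2
    · simp only [Finset.coe_filter, Set.mem_setOf_eq]
      exact ⟨by rw [hD]; exact Finset.sub_mem_sub hp.1 hq.1, sub_ne_zero.mpr hpq1⟩
  have h1 : A.card ^ 2 - 1 ≤ T.card := by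
    calc A.card ^ 2 - 1 ≤ _ := hUngar
      _ ≤ (T : Set ℝ).ncard := Set.ncard_le_ncard hsub (Finset.finite_toSet T)
      _ = T.card := Set.ncard_coe_finset T
  refine ⟨h1, ?_⟩
  have h4 : 4 ≤ A.card ^ 2 := by nlinarith
  omega
end

section
/- There is an absolute constant C such that for every finite set A of real numbers with |A| ≥ 2, |A - A| ≤ C·|Δ(A×A)|·|A|^{-1/8}, where Δ(A×A) is the set of squared distances determined by the point set A×A ⊆ ℝ². -/
open scoped Pointwise

/-- Main theorem: there is an absolute constant `C` such that for every finite set `A`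
of reals with `|A| ≥ 2`, `|A - A| ≤ C * |Δ(A×A)| * |A|^{-1/8}`. -/
theorem stmt_10 :
    ∃ C : ℝ, 0 < C ∧ ∀ A : Finset ℝ, 2 ≤ A.card →
      (((A - A).card : ℝ)) ≤
        C * ((((A ×ˢ A) ×ˢ (A ×ˢ A)).image
              (fun x => (x.1.1 - x.1.2) ^ 2 + (x.2.1 - x.2.2) ^ 2)).card : ℝ)
          * (A.card : ℝ) ^ (-(1 / 8) : ℝ) := by
  refine ⟨4, by norm_num, ?_⟩
  intro A hA
  -- Notation
  have hAne : A.Nonempty := Finset.card_pos.mp (by omega)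
  set n := A.card with hn
  set D : Finset ℝ := A - A with hD
  set S : Finset ℝ := D.image (fun d => d ^ 2) with hS
  set P : Finset ℝ := D.filter (fun x => 0 < x) with hP
  have hAne2 := hAne
  obtain ⟨a₀, ha₀⟩ := hAne2
  have h0D : (0:ℝ) ∈ D := Finset.mem_sub.mpr ⟨a₀, ha₀, a₀, ha₀, sub_self a₀⟩
  set mx := A.max' hAne with hmx
  set mn := A.min' hAne with hmn
  have hminmax : mn < mx := A.min'_lt_max'_of_card (by omega)
  set diam : ℝ := mx - mn with hdiamdef
  have hdiam0 : 0 < diam := sub_pos.mpr hminmax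
  have hdiamD : diam ∈ D :=
    Finset.mem_sub.mpr ⟨mx, A.max'_mem hAne, mn, A.min'_mem hAne, rfl⟩
  have hPne : P.Nonempty := ⟨diam, Finset.mem_filter.mpr ⟨hdiamD, hdiam0⟩⟩
  set w : ℝ := P.min' hPne with hw
  have hwP : w ∈ P := P.min'_mem hPne
  have hw0 : 0 < w := (Finset.mem_filter.mp hwP).2
  have hwD : w ∈ D := (Finset.mem_filter.mp hwP).1
  set m := P.card with hm
  -- every positive difference is at most diam
  have hPdiam : ∀ p ∈ P, p ≤ diam := by
    intro p hp
    obtain ⟨a, ha, b, hb, rfl⟩ := Finset.mem_sub.mp (Finset.mem_filter.mp hp).1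
    have h1 : a ≤ mx := A.le_max' a ha
    have h2 : mn ≤ b := A.min'_le b hb
    simp only [hdiamdef]; linarith
  -- separation: distinct points of A are at distance ≥ w
  have hsep : ∀ a ∈ A, ∀ b ∈ A, |a - b| < w → a = b := by
    intro a ha b hb habs
    by_contra hne
    rcases lt_or_gt_of_ne hne with h | h
    · have hmem : b - a ∈ P := Finset.mem_filter.mpr
        ⟨Finset.mem_sub.mpr ⟨b, hb, a, ha, rfl⟩, by linarith⟩
      have := P.min'_le _ hmem
      rw [abs_sub_comm, abs_of_pos (by linarith : (0:ℝ) < b - a)] at habs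
      linarith
    · have hmem : a - b ∈ P := Finset.mem_filter.mpr
        ⟨Finset.mem_sub.mpr ⟨a, ha, b, hb, rfl⟩, by linarith⟩
      have := P.min'_le _ hmem
      rw [abs_of_pos (by linarith : (0:ℝ) < a - b)] at habs
      linarith
  -- the chain X = mx - (A \ {mx})
  set X : Finset ℝ := (A.erase mx).image (fun a => mx - a) with hX
  have hXcard : X.card = n - 1 := by
    rw [hX, Finset.card_image_of_injective _ (sub_right_injective),
      Finset.card_erase_of_mem (A.max'_mem hAne)]
  have hXP : X ⊆ P := by
    intro x hx
    obtain ⟨a, ha, rfl⟩ := Finset.mem_image.mp hx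
    have haA : a ∈ A := Finset.mem_of_mem_erase ha
    have hane : a ≠ mx := Finset.ne_of_mem_erase ha
    have hlt : a < mx := lt_of_le_of_ne (A.le_max' a haA) hane
    exact Finset.mem_filter.mpr
      ⟨Finset.mem_sub.mpr ⟨mx, A.max'_mem hAne, a, haA, rfl⟩, by linarith⟩
  -- the key injective map
  set f : ℝ × ℝ → ℝ := fun z => 2 * diam * z.1 + 2 * w * z.2 with hf
  set E : Finset ℝ := (X ×ˢ P).image f with hE
  have hInj : Set.InjOn f ↑(X ×ˢ P) := by
    rintro ⟨d₁, p₁⟩ hz₁ ⟨d₂, p₂⟩ hz₂ hfeq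
    rw [Finset.mem_coe, Finset.mem_product] at hz₁ hz₂
    obtain ⟨hd₁, hp₁⟩ := hz₁
    obtain ⟨hd₂, hp₂⟩ := hz₂
    have hp₁0 : 0 < p₁ := (Finset.mem_filter.mp hp₁).2
    have hp₂0 : 0 < p₂ := (Finset.mem_filter.mp hp₂).2
    have hp₁d : p₁ ≤ diam := hPdiam _ hp₁
    have hp₂d : p₂ ≤ diam := hPdiam _ hp₂
    simp only [hf] at hfeq
    have h5 : diam * (d₁ - d₂) = w * (p₂ - p₁) := by linear_combination hfeq / 2
    have habs : |p₂ - p₁| < diam := abs_sub_lt_iff.mpr ⟨by linarith, by linarith⟩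
    have h6 : diam * |d₁ - d₂| = w * |p₂ - p₁| := by
      rw [← abs_of_pos hdiam0, ← abs_of_pos hw0, ← abs_mul, ← abs_mul, h5]
    have h8 : diam * |d₁ - d₂| < diam * w := by
      rw [h6, mul_comm diam w]
      exact mul_lt_mul_of_pos_left habs hw0
    have hdw : |d₁ - d₂| < w := lt_of_mul_lt_mul_left h8 hdiam0.le
    obtain ⟨a₁, ha₁, rfl⟩ := Finset.mem_image.mp hd₁
    obtain ⟨a₂, ha₂, rfl⟩ := Finset.mem_image.mp hd₂
    have ha₁A : a₁ ∈ A := Finset.mem_of_mem_erase ha₁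
    have ha₂A : a₂ ∈ A := Finset.mem_of_mem_erase ha₂
    have heq : a₂ = a₁ := by
      apply hsep a₂ ha₂A a₁ ha₁A
      have : (mx - a₁) - (mx - a₂) = a₂ - a₁ := by ring
      rwa [this] at hdw
    subst heq
    have hp : p₁ = p₂ := by
      have : w * (p₂ - p₁) = 0 := by rw [← h5]; ring
      have := mul_eq_zero.mp this
      rcases this with h | h
      · exact absurd h hw0.ne'
      · linarith
    rw [hp]
  have hEcard : E.card = (n - 1) * m := by
    rw [hE, Finset.card_image_of_injOn hInj, Finset.card_product, hXcard, hm]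
  -- key identity: 2uv ∈ (S+S) - (S+S) for u, v ∈ D
  have hDD : ∀ u ∈ D, ∀ v ∈ D, 2 * u * v ∈ (S + S) - (S + S) := by
    intro u hu v hv
    obtain ⟨a, ha, c, hc, rfl⟩ := Finset.mem_sub.mp hu
    obtain ⟨d, hd, b, hb, rfl⟩ := Finset.mem_sub.mp hv
    have hmem : ∀ x ∈ A, ∀ y ∈ A, (x - y) ^ 2 ∈ S := by
      intro x hx y hy
      exact Finset.mem_image.mpr ⟨x - y, Finset.mem_sub.mpr ⟨x, hx, y, hy, rfl⟩, rfl⟩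
    refine Finset.mem_sub.mpr
      ⟨(a - b) ^ 2 + (c - d) ^ 2,
        Finset.mem_add.mpr ⟨_, hmem a ha b hb, _, hmem c hc d hd, rfl⟩,
        (a - d) ^ 2 + (c - b) ^ 2,
        Finset.mem_add.mpr ⟨_, hmem a ha d hd, _, hmem c hc b hb, rfl⟩, by ring⟩
  -- E sits inside (S+S)+(S+S) - ((S+S)+(S+S))
  have hEsub : E ⊆ ((S + S) + (S + S)) - ((S + S) + (S + S)) := by
    intro v hv
    obtain ⟨⟨d, p⟩, hz, rfl⟩ := Finset.mem_image.mp hv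
    rw [Finset.mem_product] at hz
    obtain ⟨hd, hp⟩ := hz
    have h1 := hDD diam hdiamD d ((Finset.mem_filter.mp (hXP hd)).1)
    have h2 := hDD w hwD p ((Finset.mem_filter.mp hp).1)
    obtain ⟨x₁, hx₁, x₂, hx₂, hxe⟩ := Finset.mem_sub.mp h1
    obtain ⟨y₁, hy₁, y₂, hy₂, hye⟩ := Finset.mem_sub.mp h2
    refine Finset.mem_sub.mpr
      ⟨x₁ + y₁, Finset.mem_add.mpr ⟨x₁, hx₁, y₁, hy₁, rfl⟩,
       x₂ + y₂, Finset.mem_add.mpr ⟨x₂, hx₂, y₂, hy₂, rfl⟩, ?_⟩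
    simp only [hf]
    linarith [hxe, hye]
  -- Plünnecke–Ruzsa
  have hSne : S.Nonempty := ⟨0, Finset.mem_image.mpr ⟨0, h0D, by norm_num⟩⟩
  have hs0 : 0 < S.card := Finset.card_pos.mpr hSne
  have hPR := Finset.pluennecke_ruzsa_inequality_nsmul_sub_nsmul_add hSne S 4 4
  rw [show (4:ℕ) = 2 + 2 from rfl, add_nsmul, two_nsmul] at hPR
  -- combine: (n-1) * m * S.card^7 ≤ (S+S).card^8  (in ℕ)
  have hq : ((E.card : ℚ≥0) * (S.card : ℚ≥0) ^ 7) ≤ ((S + S).card : ℚ≥0) ^ 8 := by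
    have hE' : (E.card : ℚ≥0) ≤ ((S + S + (S + S) - (S + S + (S + S))).card : ℚ≥0) := by
      exact_mod_cast Finset.card_le_card hEsub
    have step := hE'.trans hPR
    calc (E.card : ℚ≥0) * (S.card : ℚ≥0) ^ 7
        ≤ ((((S+S).card : ℚ≥0) / (S.card : ℚ≥0)) ^ (2+2+(2+2)) * (S.card : ℚ≥0))
            * (S.card : ℚ≥0) ^ 7 := by
          exact mul_le_mul_left step _
      _ = ((S + S).card : ℚ≥0) ^ 8 := by
          have hs0' : ((S.card : ℚ≥0)) ≠ 0 := by
            exact_mod_cast hs0.ne'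
          rw [show (2+2+(2+2)) = 8 from rfl, div_pow, div_mul_eq_mul_div,
            div_mul_eq_mul_div, div_eq_iff (pow_ne_zero 8 hs0')]
          ring
  have hNat : (n - 1) * m * S.card ^ 7 ≤ (S + S).card ^ 8 := by
    rw [← hEcard]
    exact_mod_cast hq
  -- auxiliary cardinality facts
  have hmn1 : n - 1 ≤ m := by
    rw [← hXcard]; exact Finset.card_le_card hXP
  have hm1 : 1 ≤ m := by omega
  have hms : m ≤ S.card := by
    have hinj : Set.InjOn (fun d : ℝ => d ^ 2) ↑P := by
      intro a ha b hb hab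
      have ha0 : 0 < a := (Finset.mem_filter.mp (Finset.mem_coe.mp ha)).2
      have hb0 : 0 < b := (Finset.mem_filter.mp (Finset.mem_coe.mp hb)).2
      have h2 : (a - b) * (a + b) = 0 := by linear_combination hab
      rcases mul_eq_zero.mp h2 with h | h
      · linarith
      · linarith
    have : (P.image (fun d => d ^ 2)).card = m := Finset.card_image_of_injOn hinj
    rw [← this]
    exact Finset.card_le_card (Finset.image_subset_image (Finset.filter_subset _ _))
  have hDm : D.card ≤ 3 * m := by
    have hsub : D ⊆ P ∪ P.image (fun x => -x) ∪ {0} := by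
      intro d hd
      rcases lt_trichotomy d 0 with h | h | h
      · obtain ⟨a, ha, b, hb, rfl⟩ := Finset.mem_sub.mp hd
        have : b - a ∈ P := Finset.mem_filter.mpr
          ⟨Finset.mem_sub.mpr ⟨b, hb, a, ha, rfl⟩, by linarith⟩
        exact Finset.mem_union.mpr (Or.inl (Finset.mem_union.mpr (Or.inr
          (Finset.mem_image.mpr ⟨b - a, this, by ring⟩))))
      · exact Finset.mem_union.mpr (Or.inr (by simp [h]))
      · exact Finset.mem_union.mpr (Or.inl (Finset.mem_union.mpr (Or.inl
          (Finset.mem_filter.mpr ⟨hd, h⟩))))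
    calc D.card ≤ (P ∪ P.image (fun x => -x) ∪ {0}).card := Finset.card_le_card hsub
      _ ≤ (P ∪ P.image (fun x => -x)).card + ({0} : Finset ℝ).card :=
          Finset.card_union_le _ _
      _ ≤ (P.card + (P.image (fun x => -x)).card) + 1 := by
          have := Finset.card_union_le P (P.image (fun x => -x))
          simp only [Finset.card_singleton]
          omega
      _ ≤ (m + m) + 1 := by
          have := Finset.card_image_le (s := P) (f := fun x : ℝ => -x)
          omega
      _ ≤ 3 * m := by omega
  -- final ℕ inequality
  have hn2 : n ≤ 2 * (n - 1) := by omega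
  have hfinalNat : D.card ^ 8 * n ≤ 65536 * (S + S).card ^ 8 := by
    calc D.card ^ 8 * n ≤ (3 * m) ^ 8 * (2 * (n - 1)) :=
          Nat.mul_le_mul (Nat.pow_le_pow_left hDm 8) hn2
      _ = 13122 * ((n - 1) * (m * m ^ 7)) := by ring
      _ ≤ 13122 * ((n - 1) * (m * S.card ^ 7)) := by
          have : m ^ 7 ≤ S.card ^ 7 := Nat.pow_le_pow_left hms 7
          exact Nat.mul_le_mul_left _ (Nat.mul_le_mul_left _ (Nat.mul_le_mul_left _ this))
      _ = 13122 * ((n - 1) * m * S.card ^ 7) := by ring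
      _ ≤ 13122 * (S + S).card ^ 8 := Nat.mul_le_mul_left _ hNat
      _ ≤ 65536 * (S + S).card ^ 8 := Nat.mul_le_mul_right _ (by norm_num)
  -- identify the image set in the statement with S + S
  have himg : ((A ×ˢ A) ×ˢ (A ×ˢ A)).image
      (fun x => (x.1.1 - x.1.2) ^ 2 + (x.2.1 - x.2.2) ^ 2) = S + S := by
    ext v
    constructor
    · intro hv
      obtain ⟨⟨⟨a, b⟩, ⟨c, d⟩⟩, hmem, rfl⟩ := Finset.mem_image.mp hv
      rw [Finset.mem_product] at hmem
      obtain ⟨hab, hcd⟩ := hmem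
      rw [Finset.mem_product] at hab hcd
      exact Finset.mem_add.mpr
        ⟨(a - b) ^ 2, Finset.mem_image.mpr
            ⟨a - b, Finset.mem_sub.mpr ⟨a, hab.1, b, hab.2, rfl⟩, rfl⟩,
          (c - d) ^ 2, Finset.mem_image.mpr
            ⟨c - d, Finset.mem_sub.mpr ⟨c, hcd.1, d, hcd.2, rfl⟩, rfl⟩, rfl⟩
    · intro hv
      obtain ⟨y, hy, z, hz, rfl⟩ := Finset.mem_add.mp hv
      obtain ⟨d₁, hd₁, rfl⟩ := Finset.mem_image.mp hy
      obtain ⟨d₂, hd₂, rfl⟩ := Finset.mem_image.mp hz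
      obtain ⟨a, ha, b, hb, rfl⟩ := Finset.mem_sub.mp hd₁
      obtain ⟨c, hc, d, hd, rfl⟩ := Finset.mem_sub.mp hd₂
      exact Finset.mem_image.mpr ⟨((a, b), (c, d)), by
        rw [Finset.mem_product]
        constructor <;> rw [Finset.mem_product] <;> exact ⟨‹_›, ‹_›⟩, rfl⟩
  rw [himg]
  -- final real arithmetic
  have hn0 : (0:ℝ) < (n : ℝ) := by
    have : 0 < n := by omega
    exact_mod_cast this
  set σ : ℝ := ((S + S).card : ℝ) with hσ
  have hσ0 : 0 ≤ σ := by rw [hσ]; exact Nat.cast_nonneg _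
  set t : ℝ := (n : ℝ) ^ ((1/8 : ℝ)) with ht
  have ht0 : 0 < t := Real.rpow_pos_of_pos hn0 _
  have ht8 : t ^ (8:ℕ) = (n : ℝ) := by
    rw [ht, ← Real.rpow_natCast ((n:ℝ) ^ ((1/8:ℝ))) 8, ← Real.rpow_mul hn0.le]
    norm_num
  have hneg : (n : ℝ) ^ (-(1/8) : ℝ) = t⁻¹ := by
    rw [ht, ← Real.rpow_neg hn0.le]
  rw [hneg, ← div_eq_mul_inv, le_div_iff₀ ht0]
  have hcast : ((D.card : ℝ)) ^ 8 * (n : ℝ) ≤ 65536 * σ ^ 8 := by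
    rw [hσ]
    exact_mod_cast hfinalNat
  have hkey : ((D.card : ℝ) * t) ^ 8 ≤ (4 * σ) ^ 8 := by
    calc ((D.card : ℝ) * t) ^ 8 = (D.card : ℝ) ^ 8 * (n : ℝ) := by
          rw [mul_pow, ht8]
      _ ≤ 65536 * σ ^ 8 := hcast
      _ = (4 * σ) ^ 8 := by ring
  have h4σ : (0:ℝ) ≤ 4 * σ := by
    have : (0:ℝ) ≤ 4 := by norm_num
    exact mul_nonneg this hσ0
  exact le_of_pow_le_pow_left₀ (by norm_num) h4σ hkey
end

section
/- Let A be a finite set of real numbers with |A| ≥ 2 and D = A - A. Then |D·D + D·D| ≫ |D|·|A|, i.e., there is an absolute constant c > 0 with |D·D + D·D| ≥ c·|D|·|A|. -/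
/-!
Write `D = A - A` and `P` for its positive part, so that `|D| ≤ 2|P| + 1`. Solymosi's sector
argument gives `(|P/P| - 1)|P|² ≤ |D·D + D·D|²`. A generic shear of the grid `A × A` has distinct
abscissae and at most `|A|` points on a line, and its slopes are `0` or `(q + M)⁻¹` with
`q ∈ {0} ∪ ±P/P`; so Ungar's bound on the number of slopes gives `|A|² ≤ 4|P/P| + |A| + 5`.
Together these give `|A| |D| ≤ 12 |D·D + D·D|` when `|A| > 12`, and `|D| ≤ |D·D|` covers
smaller `A`.
-/

open scoped Pointwise

open Finset Function

noncomputable section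

section Rank

variable {α : Type*} [Fintype α]

def rank (f : α → ℝ) (p : α) : ℕ := #{q | f q < f p}

variable {f : α → ℝ}

theorem rank_lt_rank_iff {p q : α} : rank f p < rank f q ↔ f p < f q := by
  constructor
  · intro h
    by_contra hqp
    refine absurd h (not_lt.2 (card_le_card fun x hx => ?_))
    simp only [mem_filter, mem_univ, true_and] at hx ⊢
    exact hx.trans_le (not_lt.1 hqp)
  · intro h
    refine card_lt_card ⟨fun x hx => ?_, fun hsub => ?_⟩
    · simp only [mem_filter, mem_univ, true_and] at hx ⊢
      exact hx.trans h
    · simpa using hsub (by simpa using h : p ∈ ({q' | f q' < f q} : Finset α))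

theorem rank_injective (hf : Injective f) : Injective (rank f) := fun _ _ h =>
  hf (le_antisymm (not_lt.1 fun h' => (rank_lt_rank_iff.2 h').ne' h)
    (not_lt.1 fun h' => (rank_lt_rank_iff.2 h').ne h))

theorem rank_lt_card (p : α) : rank f p < Fintype.card α :=
  card_lt_card ⟨subset_univ _, fun h => by simpa using h (mem_univ p)⟩

theorem exists_rank_eq (hf : Injective f) {j : ℕ} (hj : j < Fintype.card α) :
    ∃ p, rank f p = j := by
  have hbij : Bijective fun p => (⟨rank f p, rank_lt_card p⟩ : Fin (Fintype.card α)) :=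
    (Fintype.bijective_iff_injective_and_card _).2
      ⟨fun p q h => rank_injective hf (Fin.mk.inj_iff.1 h), by simp⟩
  obtain ⟨p, hp⟩ := hbij.2 ⟨j, hj⟩
  exact ⟨p, Fin.mk.inj_iff.1 hp⟩

theorem card_filter_rank_lt (hf : Injective f) {m : ℕ} (hm : m ≤ Fintype.card α) :
    #{p | rank f p < m} = m := by
  have himage : ({p | rank f p < m} : Finset α).image (rank f) = range m := by
    ext j
    simp only [mem_image, mem_filter, mem_univ, true_and, mem_range]
    refine ⟨fun ⟨p, hp, hpj⟩ => hpj ▸ hp, fun hj => ?_⟩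
    obtain ⟨p, rfl⟩ := exists_rank_eq hf (hj.trans_le hm)
    exact ⟨p, hj, rfl⟩
  rw [← card_image_of_injective _ (rank_injective hf), himage, card_range]

theorem card_filter_lt_eq (hf : Injective f) (p : α) :
    #{q | f p < f q} = Fintype.card α - 1 - rank f p := by
  classical
  have hsplit : univ.filter (fun q => ¬ f q < f p) = insert p (univ.filter fun q => f p < f q) := by
    ext q
    simp only [mem_filter, mem_univ, true_and, mem_insert, not_lt]
    refine ⟨fun h => ?_, ?_⟩
    · rcases h.eq_or_lt with h | h
      · exact Or.inl (hf h.symm)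
      · exact Or.inr h
    · rintro (rfl | h)
      exacts [le_rfl, h.le]
  have hcard := card_filter_add_card_filter_not (s := univ) fun q => f q < f p
  rw [hsplit, card_insert_of_notMem (by simp), card_univ] at hcard
  simp only [rank]
  omega

end Rank

theorem sum_erase_max'_le_of_le_card_Ioo {T : Finset ℕ} {r : ℕ} (hT : T ⊆ Icc 1 r)
    (hne : T.Nonempty) (w : ℕ → ℕ)
    (hw : ∀ i ∈ T, ∀ j ∈ T, i < j → (∀ l ∈ T, l ≤ i ∨ j ≤ l) → w i ≤ #(Ioo i j)) :
    ∑ i ∈ T.erase (T.max' hne), w i ≤ r := by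
  have hnext : ∀ i, ∃ j, i ∈ T.erase (T.max' hne) → j ∈ T ∧ i < j ∧ ∀ l ∈ T, l ≤ i ∨ j ≤ l := by
    intro i
    by_cases hi : i ∈ T.erase (T.max' hne)
    · have hup : (T.filter (i < ·)).Nonempty := ⟨T.max' hne, mem_filter.2
        ⟨T.max'_mem hne, (T.le_max' i (mem_of_mem_erase hi)).lt_of_ne (ne_of_mem_erase hi)⟩⟩
      obtain ⟨j, hj, hmin⟩ := (T.filter (i < ·)).exists_min_image id hup
      simp only [mem_filter, id] at hj hmin
      exact ⟨j, fun _ => ⟨hj.1, hj.2, fun l hl => (le_or_gt l i).imp_right (hmin l ⟨hl, ·⟩)⟩⟩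
    · exact ⟨0, fun hi' => absurd hi' hi⟩
  choose next hnext using hnext
  calc ∑ i ∈ T.erase (T.max' hne), w i
      ≤ ∑ i ∈ T.erase (T.max' hne), #(Ioo i (next i)) := sum_le_sum fun i hi =>
        hw i (mem_of_mem_erase hi) _ (hnext i hi).1 (hnext i hi).2.1 (hnext i hi).2.2
    _ = #((T.erase (T.max' hne)).biUnion fun i => Ioo i (next i)) := by
        refine (card_biUnion fun i hi j hj hij => disjoint_left.2 fun l hli hlj => ?_).symm
        have := (hnext i hi).2.2 j (mem_of_mem_erase hj)
        have := (hnext j hj).2.2 i (mem_of_mem_erase hi)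
        simp only [mem_Ioo] at hli hlj
        omega
    _ ≤ #(Icc 1 r) := card_le_card <| biUnion_subset.2 fun i hi l hl => by
        have := mem_Icc.1 (hT (mem_of_mem_erase hi))
        have := mem_Icc.1 (hT (hnext i hi).1)
        have := mem_Ioo.1 hl
        exact mem_Icc.2 (by omega)
    _ = r := by simp

/-- `ρ i` orders `α` after the first `i` moves. Move `i` reverses every fibre of `g i`, and each
fibre is an interval both before and after the move; so two points swap at move `i` exactly when
they share a `g i`-fibre, and every pair swaps at exactly one move. -/
structure IsAllowableSequence {α : Type*} (ρ g : ℕ → α → ℝ) (r : ℕ) : Prop where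
  injective : ∀ i ≤ r, Injective (ρ i)
  lt_iff_lt_iff : ∀ i, 1 ≤ i → i ≤ r → ∀ p q, p ≠ q →
    ((ρ (i - 1) p < ρ (i - 1) q ↔ ρ i p < ρ i q) ↔ g i p ≠ g i q)
  existsUnique_eq : ∀ p q, p ≠ q → ∃! i, (1 ≤ i ∧ i ≤ r) ∧ g i p = g i q
  not_between : ∀ i, 1 ≤ i → i ≤ r → ∀ s, (s = i - 1 ∨ s = i) → ∀ p p' q,
    g i p = g i p' → g i q ≠ g i p → ¬ (ρ s p < ρ s q ∧ ρ s q < ρ s p')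

def movesDown {α : Type*} [Fintype α] (ρ : ℕ → α → ℝ) (m i : ℕ) : Finset α :=
  {p | m ≤ rank (ρ (i - 1)) p ∧ rank (ρ i) p < m}

def movesUp {α : Type*} [Fintype α] (ρ : ℕ → α → ℝ) (m i : ℕ) : Finset α :=
  {p | rank (ρ (i - 1)) p < m ∧ m ≤ rank (ρ i) p}

def crossingMoves {α : Type*} [Fintype α] (ρ : ℕ → α → ℝ) (m r : ℕ) : Finset ℕ :=
  (Icc 1 r).filter fun i => (movesDown ρ m i).Nonempty

theorem rank_lt_iff_of_forall_notMem {α : Type*} [Fintype α] {ρ : ℕ → α → ℝ} {m i j : ℕ}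
    {p : α} (hij : i ≤ j)
    (h : ∀ l, i < l → l ≤ j → p ∉ movesDown ρ m l ∧ p ∉ movesUp ρ m l) :
    rank (ρ j) p < m ↔ rank (ρ i) p < m := by
  induction j, hij using Nat.le_induction with
  | base => rfl
  | succ n hin ih =>
    rw [← ih fun l hl hln => h l hl (by omega)]
    have hn := h (n + 1) (by omega) le_rfl
    simp only [movesDown, movesUp, mem_filter, mem_univ, true_and, Nat.add_sub_cancel,
      not_and, not_lt] at hn
    exact ⟨fun h' => not_le.1 fun h'' => by have := hn.1 h''; omega,
      fun h' => not_le.1 (hn.2 h')⟩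


namespace IsAllowableSequence

variable {α : Type*} {ρ g : ℕ → α → ℝ} {r : ℕ}

theorem lt_iff_of_g_eq (h : IsAllowableSequence ρ g r) {p q : α} (hpq : p ≠ q) {i₀ : ℕ}
    (hi₀ : 1 ≤ i₀ ∧ i₀ ≤ r) (hg : g i₀ p = g i₀ q) {j : ℕ} (hj : j ≤ r) :
    ρ j p < ρ j q ↔ (ρ 0 p < ρ 0 q ↔ j < i₀) := by
  obtain ⟨i₁, -, huniq⟩ := h.existsUnique_eq p q hpq
  induction j with
  | zero => simp [show 0 < i₀ by omega]
  | succ n ih =>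
    have hstep := h.lt_iff_lt_iff (n + 1) (by omega) hj p q hpq
    simp only [Nat.add_sub_cancel] at hstep
    have hswap : g (n + 1) p = g (n + 1) q ↔ n + 1 = i₀ :=
      ⟨fun hg' => (huniq _ ⟨⟨by omega, hj⟩, hg'⟩).trans (huniq _ ⟨hi₀, hg⟩).symm,
        fun hn => hn ▸ hg⟩
    have ih := ih (by omega)
    by_cases hn : n + 1 = i₀
    · simp only [show n < i₀ by omega, show ¬ n + 1 < i₀ by omega, iff_true, iff_false] at ih ⊢
      have := hswap.2 hn
      tauto
    · simp only [show n < i₀ ↔ n + 1 < i₀ by omega] at ih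
      rw [← ih]
      exact (hstep.2 fun hg' => hn (hswap.1 hg')).symm

theorem exists_g_eq_between (h : IsAllowableSequence ρ g r) {p q : α} (hpq : p ≠ q)
    {j₁ j₂ : ℕ} (h12 : j₁ ≤ j₂) (hj₂ : j₂ ≤ r) (h₁ : ρ j₁ p < ρ j₁ q)
    (h₂ : ¬ ρ j₂ p < ρ j₂ q) : ∃ l, j₁ < l ∧ l ≤ j₂ ∧ g l p = g l q := by
  obtain ⟨i₀, ⟨hi₀, hg⟩, -⟩ := h.existsUnique_eq p q hpq
  rw [h.lt_iff_of_g_eq hpq hi₀ hg (h12.trans hj₂)] at h₁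
  rw [h.lt_iff_of_g_eq hpq hi₀ hg hj₂] at h₂
  refine ⟨i₀, ?_, ?_, hg⟩ <;> by_contra hc
  · simp only [hc, show ¬ j₂ < i₀ by omega] at h₁ h₂
    exact h₂ h₁
  · simp only [show j₁ < i₀ by omega, show j₂ < i₀ by omega] at h₁ h₂
    exact h₂ h₁

theorem lt_of_lt_of_g_ne (h : IsAllowableSequence ρ g r) {i s : ℕ} (hi : 1 ≤ i) (hir : i ≤ r)
    (hs : s = i - 1 ∨ s = i) {x y f : α} (hxy : g i x = g i y) (hf : g i f ≠ g i x)
    (hfy : ρ s f < ρ s y) : ρ s f < ρ s x := by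
  rcases lt_trichotomy (ρ s f) (ρ s x) with hfx | hfx | hfx
  · exact hfx
  · exact absurd (congrArg (g i) (h.injective s (by omega) hfx)) hf
  · exact absurd ⟨hfx, hfy⟩ (h.not_between i hi hir s hs x y f hxy hf)

theorem lt_of_lt_of_g_ne' (h : IsAllowableSequence ρ g r) {i s : ℕ} (hi : 1 ≤ i) (hir : i ≤ r)
    (hs : s = i - 1 ∨ s = i) {x y f : α} (hxy : g i x = g i y) (hf : g i f ≠ g i x)
    (hxf : ρ s x < ρ s f) : ρ s y < ρ s f := by
  rcases lt_trichotomy (ρ s y) (ρ s f) with hyf | hyf | hyf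
  · exact hyf
  · exact absurd (hxy.trans (congrArg (g i) (h.injective s (by omega) hyf))).symm hf
  · exact absurd ⟨hxf, hyf⟩ (h.not_between i hi hir s hs x y f hxy hf)

theorem card_le_card_Ioo_of_forall_exists (h : IsAllowableSequence ρ g r) {X : Finset α}
    {f : α} {i i' : ℕ} (hi : 1 ≤ i) (hi' : i' ≤ r) (hX : ∀ x ∈ X, ∀ y ∈ X, g i x = g i y)
    (hswap : ∀ x ∈ X, ∃ l, i < l ∧ l < i' ∧ g l x = g l f) : #X ≤ #(Ioo i i') := by
  choose! l hl₁ hl₂ hl₃ using hswap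
  refine card_le_card_of_injOn l (fun x hx => mem_Ioo.2 ⟨hl₁ x hx, hl₂ x hx⟩) ?_
  intro a ha b hb hab
  by_contra hne
  obtain ⟨i₀, -, huniq⟩ := h.existsUnique_eq a b hne
  have hi₀ := huniq i ⟨⟨hi, by have := hl₁ a ha; have := hl₂ a ha; omega⟩, hX a ha b hb⟩
  have hl₀ := huniq (l a) ⟨⟨by have := hl₁ a ha; omega, by have := hl₂ a ha; omega⟩,
    (hl₃ a ha).trans (hab ▸ hl₃ b hb).symm⟩
  have := hl₁ a ha
  omega

variable [Fintype α]

theorem rank_last (h : IsAllowableSequence ρ g r) (p : α) :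
    rank (ρ r) p = Fintype.card α - 1 - rank (ρ 0) p := by
  rw [rank, ← card_filter_lt_eq (h.injective 0 (Nat.zero_le r))]
  congr 1
  ext q
  simp only [mem_filter, mem_univ, true_and]
  by_cases hqp : q = p
  · simp [hqp]
  obtain ⟨i₀, ⟨hi₀, hg⟩, -⟩ := h.existsUnique_eq q p hqp
  rw [h.lt_iff_of_g_eq hqp hi₀ hg le_rfl]
  simp only [show ¬ r < i₀ by omega, iff_false, not_lt]
  exact ⟨fun hle => hle.lt_of_ne ((h.injective 0 (Nat.zero_le r)).ne hqp).symm, le_of_lt⟩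

theorem card_movesDown_eq_card_movesUp (h : IsAllowableSequence ρ g r) {m i : ℕ} (hi : i ≤ r)
    (hm : m ≤ Fintype.card α) : #(movesDown ρ m i) = #(movesUp ρ m i) := by
  classical
  have hdown : movesDown ρ m i =
      ({p | rank (ρ i) p < m} : Finset α) \ ({p | rank (ρ (i - 1)) p < m} : Finset α) := by
    ext p
    simp only [movesDown, mem_filter, mem_sdiff, mem_univ, true_and, not_lt]
    tauto
  have hup : movesUp ρ m i =
      ({p | rank (ρ (i - 1)) p < m} : Finset α) \ ({p | rank (ρ i) p < m} : Finset α) := by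
    ext p
    simp only [movesUp, mem_filter, mem_sdiff, mem_univ, true_and, not_lt]
  rw [hdown, hup]
  exact card_sdiff_comm <| by
    rw [card_filter_rank_lt (h.injective i hi) hm,
      card_filter_rank_lt (h.injective (i - 1) (by omega)) hm]

theorem movesUp_nonempty (h : IsAllowableSequence ρ g r) {m i : ℕ} (hi : i ≤ r)
    (hm : m ≤ Fintype.card α) (hd : (movesDown ρ m i).Nonempty) : (movesUp ρ m i).Nonempty := by
  rw [← card_pos, ← h.card_movesDown_eq_card_movesUp hi hm]
  exact card_pos.2 hd

theorem g_eq_of_mem_movesUp_of_mem_movesDown (h : IsAllowableSequence ρ g r) {m i : ℕ}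
    (hi : 1 ≤ i) (hir : i ≤ r) {u d : α} (hu : u ∈ movesUp ρ m i) (hd : d ∈ movesDown ρ m i) :
    g i u = g i d := by
  simp only [movesUp, movesDown, mem_filter, mem_univ, true_and] at hu hd
  have hud : u ≠ d := by rintro rfl; omega
  have hbefore : ρ (i - 1) u < ρ (i - 1) d := rank_lt_rank_iff.1 (by omega)
  have hafter : ¬ ρ i u < ρ i d := fun h' => by have := rank_lt_rank_iff.2 h'; omega
  by_contra hne
  exact hafter (((h.lt_iff_lt_iff i hi hir u d hud).2 hne).1 hbefore)

theorem g_eq_of_mem_moves [DecidableEq α] (h : IsAllowableSequence ρ g r) {m i : ℕ}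
    (hi : 1 ≤ i) (hir : i ≤ r) (hm : m ≤ Fintype.card α) {p q : α}
    (hp : p ∈ movesDown ρ m i ∪ movesUp ρ m i)
    (hq : q ∈ movesDown ρ m i ∪ movesUp ρ m i) : g i p = g i q := by
  obtain ⟨d, hd⟩ : (movesDown ρ m i).Nonempty := by
    rcases mem_union.1 hp with hp | hp
    · exact ⟨p, hp⟩
    · rw [← card_pos, h.card_movesDown_eq_card_movesUp hir hm]
      exact card_pos.2 ⟨p, hp⟩
  obtain ⟨u, hu⟩ := h.movesUp_nonempty hir hm ⟨d, hd⟩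
  have hud := h.g_eq_of_mem_movesUp_of_mem_movesDown hi hir hu hd
  have key : ∀ x ∈ movesDown ρ m i ∪ movesUp ρ m i, g i x = g i d := fun x hx => by
    rcases mem_union.1 hx with hx | hx
    · rw [← h.g_eq_of_mem_movesUp_of_mem_movesDown hi hir hu hx, hud]
    · exact h.g_eq_of_mem_movesUp_of_mem_movesDown hi hir hx hd
  rw [key p hp, key q hq]

theorem g_eq_of_rank_eq (h : IsAllowableSequence ρ g r) {m i : ℕ} (hi : 1 ≤ i) (hir : i ≤ r)
    (hm : m ≤ Fintype.card α) {d o : α} (hd : d ∈ movesDown ρ m i)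
    (ho : rank (ρ (i - 1)) o = m - 1 ∨ rank (ρ (i - 1)) o = m) : g i o = g i d := by
  obtain ⟨u, hu⟩ := h.movesUp_nonempty hir hm ⟨d, hd⟩
  have hud := h.g_eq_of_mem_movesUp_of_mem_movesDown hi hir hu hd
  simp only [movesUp, movesDown, mem_filter, mem_univ, true_and] at hu hd
  by_contra hne
  rw [← hud] at hne
  rcases ho with ho | ho
  · have := h.lt_of_lt_of_g_ne hi hir (Or.inl rfl) hud hne (rank_lt_rank_iff.1 (by omega))
    have := rank_lt_rank_iff.2 this
    omega
  · have := h.lt_of_lt_of_g_ne' hi hir (Or.inl rfl) hud hne (rank_lt_rank_iff.1 (by omega))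
    have := rank_lt_rank_iff.2 this
    omega

theorem card_movesDown_le_of_g_ne [DecidableEq α] (h : IsAllowableSequence ρ g r) {m i i' : ℕ}
    (hi : 1 ≤ i) (hii' : i < i') (hi' : i' ≤ r) (hm : m ≤ Fintype.card α)
    (hside : ∀ p, rank (ρ (i' - 1)) p < m ↔ rank (ρ i) p < m) {o d : α}
    (ho : rank (ρ (i' - 1)) o + 1 = m) (hd : d ∈ movesDown ρ m i) (hod : g i o ≠ g i d) :
    #(movesDown ρ m i) ≤ #(Ioo i i') := by
  have hir : i ≤ r := by omega
  refine h.card_le_card_Ioo_of_forall_exists (f := o) hi hi'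
    (fun x hx y hy => h.g_eq_of_mem_moves hi hir hm (mem_union_left _ hx) (mem_union_left _ hy))
    fun x hx => ?_
  obtain ⟨u, hu⟩ := h.movesUp_nonempty hir hm ⟨d, hd⟩
  have hux := h.g_eq_of_mem_movesUp_of_mem_movesDown hi hir hu hx
  have hox : g i o ≠ g i x := by
    rwa [h.g_eq_of_mem_moves hi hir hm (mem_union_left _ hx) (mem_union_left _ hd)]
  have hxo : x ≠ o := fun hxo => hox (hxo ▸ rfl)
  simp only [movesUp, movesDown, mem_filter, mem_univ, true_and] at hu hx
  have hbefore : ρ i o < ρ i x :=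
    h.lt_of_lt_of_g_ne hi hir (Or.inr rfl) hux.symm hox
      (rank_lt_rank_iff.1 (by have := (hside o).1 (by omega); omega))
  have hafter : ¬ ρ (i' - 1) o < ρ (i' - 1) x := fun hlt => by
    have := rank_lt_rank_iff.2 hlt
    have := (hside x).2 hx.2
    omega
  obtain ⟨l, hl₁, hl₂, hl₃⟩ :=
    h.exists_g_eq_between hxo.symm (by omega : i ≤ i' - 1) (by omega) hbefore hafter
  exact ⟨l, hl₁, by omega, hl₃.symm⟩

theorem card_movesUp_le_of_g_ne [DecidableEq α] (h : IsAllowableSequence ρ g r) {m i i' : ℕ}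
    (hi : 1 ≤ i) (hii' : i < i') (hi' : i' ≤ r) (hm : m ≤ Fintype.card α)
    (hside : ∀ p, rank (ρ (i' - 1)) p < m ↔ rank (ρ i) p < m) {o d : α}
    (ho : rank (ρ (i' - 1)) o = m) (hd : d ∈ movesDown ρ m i) (hod : g i o ≠ g i d) :
    #(movesUp ρ m i) ≤ #(Ioo i i') := by
  have hir : i ≤ r := by omega
  refine h.card_le_card_Ioo_of_forall_exists (f := o) hi hi'
    (fun x hx y hy => h.g_eq_of_mem_moves hi hir hm (mem_union_right _ hx) (mem_union_right _ hy))
    fun x hx => ?_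
  have hxd := h.g_eq_of_mem_movesUp_of_mem_movesDown hi hir hx hd
  have hxo : x ≠ o := fun hxo => hod (hxo ▸ hxd)
  simp only [movesUp, movesDown, mem_filter, mem_univ, true_and] at hx hd
  have hbefore : ρ i x < ρ i o :=
    h.lt_of_lt_of_g_ne' hi hir (Or.inr rfl) hxd.symm (hxd ▸ hod)
      (rank_lt_rank_iff.1 (by have := (hside o).not.1 (by omega); omega))
  have hafter : ¬ ρ (i' - 1) x < ρ (i' - 1) o := fun hlt => by
    have := rank_lt_rank_iff.2 hlt
    have := (hside x).1 (by omega)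
    omega
  obtain ⟨l, hl₁, hl₂, hl₃⟩ :=
    h.exists_g_eq_between hxo (by omega : i ≤ i' - 1) (by omega) hbefore hafter
  exact ⟨l, hl₁, by omega, hl₃⟩

/-- Just before move `i'` the points of ranks `m - 1` and `m` both lie in the block of move `i'`,
so one of them, `o`, lies outside the block of move `i`. Then `o` swaps with every point that
move `i` carries across position `m`, at pairwise distinct moves strictly between `i` and `i'`. -/
theorem card_movesDown_le_card_Ioo [DecidableEq α] (h : IsAllowableSequence ρ g r) {m i i' : ℕ}
    (hm₁ : 1 ≤ m) (hmN : m + 1 ≤ Fintype.card α) (hi : 1 ≤ i) (hii' : i < i') (hi' : i' ≤ r)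
    (hd : (movesDown ρ m i).Nonempty) (hd' : (movesDown ρ m i').Nonempty)
    (hgap : ∀ l, i < l → l < i' → movesDown ρ m l = ∅) : #(movesDown ρ m i) ≤ #(Ioo i i') := by
  have hm : m ≤ Fintype.card α := by omega
  have hside : ∀ p, rank (ρ (i' - 1)) p < m ↔ rank (ρ i) p < m := fun p =>
    rank_lt_iff_of_forall_notMem (by omega) fun l hl hl' => by
      have hdown := hgap l hl (by omega)
      have hup : movesUp ρ m l = ∅ := card_eq_zero.1 <| by
        rw [← h.card_movesDown_eq_card_movesUp (by omega) hm, hdown, card_empty]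
      simp [hdown, hup]
  have hinj := h.injective (i' - 1) (by omega)
  obtain ⟨o₁, ho₁⟩ := exists_rank_eq hinj (j := m - 1) (by omega)
  obtain ⟨o₂, ho₂⟩ := exists_rank_eq hinj (j := m) (by omega)
  obtain ⟨d', hd'⟩ := hd'
  obtain ⟨d, hd⟩ := hd
  have hg₁ := h.g_eq_of_rank_eq (by omega) hi' hm hd' (Or.inl ho₁)
  have hg₂ := h.g_eq_of_rank_eq (by omega) hi' hm hd' (Or.inr ho₂)
  have hne : g i o₁ ≠ g i d ∨ g i o₂ ≠ g i d := by
    by_contra! hg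
    have ho : o₁ ≠ o₂ := fun e => by rw [e] at ho₁; omega
    obtain ⟨i₀, -, huniq⟩ := h.existsUnique_eq o₁ o₂ ho
    have := huniq i ⟨⟨hi, by omega⟩, hg.1.trans hg.2.symm⟩
    have := huniq i' ⟨⟨by omega, hi'⟩, hg₁.trans hg₂.symm⟩
    omega
  rcases hne with hne | hne
  · exact h.card_movesDown_le_of_g_ne hi hii' hi' hm hside (by omega) hd hne
  · rw [h.card_movesDown_eq_card_movesUp (by omega) hm]
    exact h.card_movesUp_le_of_g_ne hi hii' hi' hm hside ho₂ hd hne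

theorem card_sub_one_le_card_filter_not_iff (h : IsAllowableSequence ρ g r) :
    Fintype.card α - 1 ≤
      #{p | ¬ (rank (ρ 0) p < Fintype.card α / 2 ↔ rank (ρ r) p < Fintype.card α / 2)} := by
  have hmid : ∀ p, (rank (ρ 0) p < Fintype.card α / 2 ↔ rank (ρ r) p < Fintype.card α / 2) →
      rank (ρ 0) p = Fintype.card α / 2 := fun p hp => by
    have := rank_lt_card (f := ρ 0) p
    rw [h.rank_last] at hp
    by_cases h0 : rank (ρ 0) p < Fintype.card α / 2
    · have := hp.1 h0
      omega
    · have := hp.not.1 h0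
      omega
  have hstay : #{p | rank (ρ 0) p < Fintype.card α / 2 ↔ rank (ρ r) p < Fintype.card α / 2} ≤ 1 :=
    card_le_one.2 fun p hp q hq => rank_injective (h.injective 0 (Nat.zero_le r)) <| by
      simp only [mem_filter, mem_univ, true_and] at hp hq
      rw [hmid p hp, hmid q hq]
  have := card_filter_add_card_filter_not (s := univ)
    fun p => rank (ρ 0) p < Fintype.card α / 2 ↔ rank (ρ r) p < Fintype.card α / 2
  rw [card_univ] at this
  omega

theorem card_sub_one_le_sum_card_movesDown (h : IsAllowableSequence ρ g r) :
    Fintype.card α - 1 ≤ ∑ i ∈ crossingMoves ρ (Fintype.card α / 2) r,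
      2 * #(movesDown ρ (Fintype.card α / 2) i) := by
  classical
  set m := Fintype.card α / 2
  have hm : m ≤ Fintype.card α := Nat.div_le_self _ _
  calc
    _ ≤ #{p | ¬ (rank (ρ 0) p < m ↔ rank (ρ r) p < m)} := h.card_sub_one_le_card_filter_not_iff
    _ ≤ #((crossingMoves ρ m r).biUnion fun i => movesDown ρ m i ∪ movesUp ρ m i) :=
        card_le_card fun p hp => by
          simp only [mem_filter, mem_univ, true_and] at hp
          by_contra hpT
          refine hp (rank_lt_iff_of_forall_notMem (Nat.zero_le r) fun l hl hlr => ?_).symm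
          refine not_or.1 fun hpl => hpT (mem_biUnion.2 ⟨l, mem_filter.2
            ⟨mem_Icc.2 ⟨hl, hlr⟩, ?_⟩, mem_union.2 hpl⟩)
          rcases hpl with hpl | hpl
          · exact ⟨p, hpl⟩
          · exact card_pos.1 (h.card_movesDown_eq_card_movesUp hlr hm ▸ card_pos.2 ⟨p, hpl⟩)
    _ ≤ ∑ i ∈ crossingMoves ρ m r, #(movesDown ρ m i ∪ movesUp ρ m i) := card_biUnion_le
    _ ≤ ∑ i ∈ crossingMoves ρ m r, 2 * #(movesDown ρ m i) := sum_le_sum fun i hi => by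
        have := card_union_le (movesDown ρ m i) (movesUp ρ m i)
        rw [← h.card_movesDown_eq_card_movesUp (mem_Icc.1 (mem_filter.1 hi).1).2 hm] at this
        omega

theorem two_mul_card_movesDown_le [DecidableEq α] (h : IsAllowableSequence ρ g r) {K m i : ℕ}
    (hK : ∀ p, #{q | g i q = g i p} ≤ K) (hi : 1 ≤ i) (hir : i ≤ r)
    (hm : m ≤ Fintype.card α) : 2 * #(movesDown ρ m i) ≤ K := by
  rcases (movesDown ρ m i).eq_empty_or_nonempty with hd | ⟨d, hd⟩
  · simp [hd]
  have hfibre : movesDown ρ m i ∪ movesUp ρ m i ⊆ ({q | g i q = g i d} : Finset α) :=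
    fun q hq => by simpa using h.g_eq_of_mem_moves hi hir hm hq (mem_union_left _ hd)
  have hdisj : Disjoint (movesDown ρ m i) (movesUp ρ m i) := disjoint_left.2 fun q hq₁ hq₂ => by
    simp only [movesDown, movesUp, mem_filter, mem_univ, true_and] at hq₁ hq₂
    omega
  have := (card_le_card hfibre).trans (hK d)
  rw [card_union_of_disjoint hdisj, ← h.card_movesDown_eq_card_movesUp hir hm] at this
  omega

theorem sum_erase_max'_card_movesDown_le [DecidableEq α] (h : IsAllowableSequence ρ g r)
    {m : ℕ} (hm₁ : 1 ≤ m) (hmN : m + 1 ≤ Fintype.card α) (hne : (crossingMoves ρ m r).Nonempty) :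
    ∑ i ∈ (crossingMoves ρ m r).erase ((crossingMoves ρ m r).max' hne), #(movesDown ρ m i) ≤ r :=
  sum_erase_max'_le_of_le_card_Ioo (filter_subset _ _) hne _ fun i hi j hj hij hgap => by
    obtain ⟨hi', hdi⟩ := mem_filter.1 hi
    obtain ⟨hj', hdj⟩ := mem_filter.1 hj
    have hi' := mem_Icc.1 hi'
    have hj' := mem_Icc.1 hj'
    refine h.card_movesDown_le_card_Ioo hm₁ hmN hi'.1 hij hj'.2 hdi hdj
      fun l hil hlj => not_nonempty_iff_eq_empty.1 fun hdl => ?_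
    have := hgap l (mem_filter.2 ⟨mem_Icc.2 ⟨by omega, by omega⟩, hdl⟩)
    omega

/-- Every point but at most one crosses the middle position. Each crossing move other than the
last carries at most as many points across as there are moves before the next crossing move, and
the last one carries at most `K`. -/
theorem card_le (h : IsAllowableSequence ρ g r) {K : ℕ}
    (hK : ∀ i, 1 ≤ i → i ≤ r → ∀ p, #{q | g i q = g i p} ≤ K) :
    Fintype.card α ≤ 2 * r + K + 1 := by
  classical
  by_cases hN : Fintype.card α < 2
  · omega
  have hcover := h.card_sub_one_le_sum_card_movesDown
  set T := crossingMoves ρ (Fintype.card α / 2) r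
  have hTne : T.Nonempty := nonempty_iff_ne_empty.2 fun hT => by
    rw [hT, sum_empty] at hcover
    omega
  have hiM := mem_Icc.1 (mem_filter.1 (T.max'_mem hTne)).1
  have hlast := h.two_mul_card_movesDown_le (hK _ hiM.1 hiM.2) hiM.1 hiM.2 (Nat.div_le_self _ 2)
  have hrest : ∑ i ∈ T.erase (T.max' hTne), #(movesDown ρ (Fintype.card α / 2) i) ≤ r :=
    h.sum_erase_max'_card_movesDown_le (by omega) (by omega) hTne
  rw [← add_sum_erase _ _ (T.max'_mem hTne), ← mul_sum] at hcover
  omega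

end IsAllowableSequence

theorem exists_strictMono_image_range (S : Finset ℝ) :
    ∃ f : ℕ → ℝ, StrictMono f ∧ (range #S).image f = S := by
  obtain ⟨M, hM⟩ := S.bddAbove
  let e := S.orderEmbOfFin rfl
  refine ⟨fun i => if h : i < #S then e ⟨i, h⟩ else M + 1 + i,
    strictMono_nat_of_lt_succ fun i => ?_, ?_⟩
  · by_cases hi : i + 1 < #S
    · simp only [hi, show i < #S by omega, dite_true]
      exact e.strictMono (Fin.mk_lt_mk.2 (Nat.lt_succ_self i))
    · simp only [hi, dite_false]
      split_ifs
      · have := hM (S.orderEmbOfFin_mem rfl ⟨i, ‹_›⟩)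
        have : (0 : ℝ) ≤ i := i.cast_nonneg
        push_cast
        linarith
      · push_cast
        linarith
  · ext τ
    simp only [mem_image, mem_range]
    constructor
    · rintro ⟨i, hi, rfl⟩
      rw [dif_pos hi]
      exact S.orderEmbOfFin_mem rfl _
    · intro hτ
      obtain ⟨⟨i, hi⟩, hiτ⟩ := (Set.ext_iff.1 (S.range_orderEmbOfFin rfl) τ).2 hτ
      exact ⟨i, hi, by simpa [hi] using hiτ⟩

def separator (f : ℕ → ℝ) : ℕ → ℝ
  | 0 => f 0 - 1
  | i + 1 => (f i + f (i + 1)) / 2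

namespace StrictMono

variable {f : ℕ → ℝ}

theorem separator_lt (hf : StrictMono f) (i : ℕ) : separator f i < f i := by
  cases i with
  | zero => simp [separator]
  | succ i => simp only [separator]; linarith [hf (Nat.lt_succ_self i)]

theorem lt_separator_succ (hf : StrictMono f) (i : ℕ) : f i < separator f (i + 1) := by
  simp only [separator]
  linarith [hf (Nat.lt_succ_self i)]

theorem lt_separator_iff (hf : StrictMono f) {i j : ℕ} : f j < separator f i ↔ j < i := by
  constructor
  · intro h
    by_contra hij
    exact (hf.separator_lt i).not_ge (h.le.trans' (hf.monotone (not_lt.1 hij)))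
  · intro hji
    obtain ⟨k, rfl⟩ := Nat.exists_eq_add_of_lt hji
    exact (hf.monotone (by omega : j ≤ j + k)).trans_lt (hf.lt_separator_succ _)

theorem separator_ne (hf : StrictMono f) (i j : ℕ) : separator f i ≠ f j := fun h => by
  rcases lt_or_ge j i with hji | hij
  · exact (hf.lt_separator_iff.2 hji).ne' h
  · exact (hf.separator_lt i).not_ge ((hf.monotone hij).trans h.ge)

end StrictMono

theorem sub_mul_sub_sub_mul_eq {a b c d : ℝ} (t : ℝ) (hac : a ≠ c) :
    b - t * a - (d - t * c) = ((b - d) / (a - c) - t) * (a - c) := by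
  field_simp [sub_ne_zero.2 hac]
  ring

theorem sub_mul_lt_sub_mul_iff {a b c d t : ℝ} (hac : a ≠ c) (ht : (b - d) / (a - c) ≠ t) :
    b - t * a < d - t * c ↔ ((b - d) / (a - c) < t ↔ c < a) := by
  rw [← sub_neg, sub_mul_sub_sub_mul_eq t hac, mul_neg_iff, sub_pos, sub_neg, sub_pos, sub_neg]
  rcases ht.lt_or_gt with h | h <;> rcases hac.lt_or_gt with h' | h' <;>
    simp [h, h', h.not_gt, h'.not_gt]

def slopes {ι : Type*} [Fintype ι] (x y : ι → ℝ) : Finset ℝ :=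
  univ.offDiag.image fun pq : ι × ι => (y pq.1 - y pq.2) / (x pq.1 - x pq.2)

section SlopeIndex

variable {f : ℕ → ℝ} {a b c d : ℝ} {k : ℕ}

theorem sub_separator_mul_lt_iff (hf : StrictMono f) (hac : a ≠ c) (hk : f k = (b - d) / (a - c))
    (i : ℕ) : b - separator f i * a < d - separator f i * c ↔ (k < i ↔ c < a) := by
  rw [sub_mul_lt_sub_mul_iff hac (hk ▸ (hf.separator_ne i k).symm), ← hk, hf.lt_separator_iff]

theorem sub_mul_eq_iff (hf : StrictMono f) (hac : a ≠ c) (hk : f k = (b - d) / (a - c)) (j : ℕ) :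
    b - f j * a = d - f j * c ↔ k = j := by
  rw [← sub_eq_zero, sub_mul_sub_sub_mul_eq _ hac, mul_eq_zero,
    or_iff_left (sub_ne_zero.2 hac), sub_eq_zero, ← hk, hf.injective.eq_iff]

theorem sub_mul_lt_iff (hf : StrictMono f) (hac : a ≠ c) (hk : f k = (b - d) / (a - c)) {j : ℕ}
    (hkj : k ≠ j) : b - f j * a < d - f j * c ↔ (k < j ↔ c < a) := by
  rw [sub_mul_lt_sub_mul_iff hac (hk ▸ hf.injective.ne hkj), ← hk, hf.lt_iff_lt]

end SlopeIndex

/-- Rotating a direction through the slopes `f 0 < ⋯ < f (r - 1)` of the points: `ρ i` orders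
them by projection along a direction between the `i`-th and `(i + 1)`-st slope, and move `i`
reverses the blocks of points on common lines of slope `f (i - 1)`. -/
theorem isAllowableSequence_slopes {ι : Type*} [Fintype ι] [DecidableEq ι] {x y : ι → ℝ}
    (hx : Injective x) {f : ℕ → ℝ} (hf : StrictMono f)
    (hfS : (range #(slopes x y)).image f = slopes x y) :
    IsAllowableSequence (fun i p => y p - separator f i * x p) (fun i p => y p - f (i - 1) * x p)
      #(slopes x y) := by
  have hslope : ∀ p q, p ≠ q → ∃ k, k < #(slopes x y) ∧ f k = (y p - y q) / (x p - x q) :=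
    fun p q hpq => by
      have : (y p - y q) / (x p - x q) ∈ slopes x y := mem_image.2 ⟨(p, q), by simp [hpq], rfl⟩
      rw [← hfS] at this
      simpa using this
  choose! κ hκr hκ using hslope
  have hρg : ∀ i s, (s = i - 1 ∨ s = i) → ∀ p q, y p - f (i - 1) * x p ≠ y q - f (i - 1) * x q →
      (y p - separator f s * x p < y q - separator f s * x q ↔
        y p - f (i - 1) * x p < y q - f (i - 1) * x q) := fun i s hs p q hpq => by
    have hne : p ≠ q := fun e => hpq (e ▸ rfl)
    have hκi : κ p q ≠ i - 1 := fun e => hpq ((sub_mul_eq_iff hf (hx.ne hne) (hκ p q hne) _).2 e)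
    rw [sub_separator_mul_lt_iff hf (hx.ne hne) (hκ p q hne),
      sub_mul_lt_iff hf (hx.ne hne) (hκ p q hne) hκi, show κ p q < s ↔ κ p q < i - 1 by omega]
  refine ⟨fun i _ p q hpq => ?_, fun i hi _ p q hpq => ?_, fun p q hpq => ?_, ?_⟩
  · by_contra hne
    have := sub_mul_sub_sub_mul_eq (b := y p) (d := y q) (separator f i) (hx.ne hne)
    rw [show y p - separator f i * x p = y q - separator f i * x q from hpq, sub_self,
      ← hκ p q hne, eq_comm, mul_eq_zero] at this
    exact this.elim (fun h => hf.separator_ne i _ (sub_eq_zero.1 h).symm)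
      fun h => hx.ne hne (sub_eq_zero.1 h)
  · rw [sub_separator_mul_lt_iff hf (hx.ne hpq) (hκ p q hpq),
      sub_separator_mul_lt_iff hf (hx.ne hpq) (hκ p q hpq), Ne,
      sub_mul_eq_iff hf (hx.ne hpq) (hκ p q hpq)]
    have : (κ p q < i - 1 ↔ κ p q < i) ↔ κ p q ≠ i - 1 := by omega
    tauto
  · refine ⟨κ p q + 1, ⟨⟨by omega, hκr p q hpq⟩,
      (sub_mul_eq_iff hf (hx.ne hpq) (hκ p q hpq) _).2 rfl⟩, ?_⟩
    rintro j ⟨hj, hgj⟩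
    have := (sub_mul_eq_iff hf (hx.ne hpq) (hκ p q hpq) _).1 hgj
    omega
  · rintro i - - s hs p p' q hpp' hqp ⟨hpq, hqp'⟩
    rw [hρg i s hs p q (Ne.symm hqp)] at hpq
    rw [hρg i s hs q p' (hpp' ▸ hqp)] at hqp'
    exact (hpq.trans hqp').ne hpp'

theorem card_le_two_mul_card_slopes_add {ι : Type*} [Fintype ι] [DecidableEq ι] {x y : ι → ℝ}
    (hx : Injective x) {K : ℕ} (hK : ∀ c d : ℝ, #{i | y i - c * x i = d} ≤ K) :
    Fintype.card ι ≤ 2 * #(slopes x y) + K + 1 := by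
  obtain ⟨f, hf, hfS⟩ := exists_strictMono_image_range (slopes x y)
  exact ((isAllowableSequence_slopes hx hf hfS).card_le fun i _ _ p => hK _ _).trans (by omega)

def posDiffs (A : Finset ℝ) : Finset ℝ := (A - A).filter (0 < ·)

section Difference

variable {A : Finset ℝ}

theorem neg_mem_sub_self {d : ℝ} (hd : d ∈ A - A) : -d ∈ A - A := by
  obtain ⟨a, ha, b, hb, rfl⟩ := mem_sub.1 hd
  exact mem_sub.2 ⟨b, hb, a, ha, by ring⟩

theorem abs_mem_posDiffs {d : ℝ} (hd : d ∈ A - A) (hd₀ : d ≠ 0) : |d| ∈ posDiffs A :=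
  mem_filter.2 ⟨by rcases abs_choice d with h | h <;> rw [h]; exacts [hd, neg_mem_sub_self hd],
    abs_pos.2 hd₀⟩

theorem div_mem_of_mem_sub_self {u v : ℝ} (hu : u ∈ A - A) (hv : v ∈ A - A) (hv₀ : v ≠ 0) :
    u / v ∈ insert 0 (posDiffs A / posDiffs A ∪ -(posDiffs A / posDiffs A)) := by
  by_cases hu₀ : u = 0
  · simp [hu₀]
  have habs : |u / v| ∈ posDiffs A / posDiffs A :=
    abs_div u v ▸ div_mem_div (abs_mem_posDiffs hu hu₀) (abs_mem_posDiffs hv hv₀)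
  rcases abs_choice (u / v) with h | h
  · exact mem_insert_of_mem (mem_union_left _ (h ▸ habs))
  · exact mem_insert_of_mem (mem_union_right _ (mem_neg.2 ⟨_, habs, by rw [h, neg_neg]⟩))

theorem card_sub_self_le (A : Finset ℝ) : #(A - A) ≤ 2 * #(posDiffs A) + 1 := by
  classical
  have hsub : A - A ⊆ insert 0 (posDiffs A ∪ -posDiffs A) := by
    intro d hd
    rcases lt_trichotomy d 0 with h | rfl | h
    · refine mem_insert_of_mem (mem_union_right _ (mem_neg.2 ⟨-d, ?_, neg_neg d⟩))
      exact mem_filter.2 ⟨neg_mem_sub_self hd, neg_pos.2 h⟩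
    · exact mem_insert_self _ _
    · exact mem_insert_of_mem (mem_union_left _ (mem_filter.2 ⟨hd, h⟩))
  have := (card_le_card hsub).trans (card_insert_le _ _)
  have := card_union_le (posDiffs A) (-posDiffs A)
  rw [card_neg] at this
  omega

end Difference

theorem exists_forall_add_mul_ne_zero (S : Finset ℝ) :
    ∃ M : ℝ, ∀ u ∈ S, ∀ v ∈ S, v ≠ 0 → u + M * v ≠ 0 := by
  obtain ⟨M, hM⟩ := Infinite.exists_notMem_finset ((S ×ˢ S).image fun uv => -uv.1 / uv.2)
  refine ⟨M, fun u hu v hv hv₀ h => hM (mem_image.2 ⟨(u, v), mem_product.2 ⟨hu, hv⟩, ?_⟩)⟩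
  field_simp
  linarith

section Shear

variable {A : Finset ℝ} {M : ℝ}

theorem injective_shear (hM : ∀ u ∈ A - A, ∀ v ∈ A - A, v ≠ 0 → u + M * v ≠ 0) :
    Injective fun ab : A × A => (ab.1 : ℝ) + M * ab.2 := by
  rintro ⟨⟨a, ha⟩, ⟨b, hb⟩⟩ ⟨⟨a', ha'⟩, ⟨b', hb'⟩⟩ h
  simp only at h
  obtain rfl : b = b' := by_contra fun hne =>
    hM _ (sub_mem_sub ha ha') _ (sub_mem_sub hb hb') (sub_ne_zero.2 hne) (by linarith)
  obtain rfl : a = a' := by linarith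
  rfl

theorem card_filter_shear_eq_le (A : Finset ℝ) (M c d : ℝ) :
    #{ab : A × A | (ab.2 : ℝ) - c * (ab.1 + M * ab.2) = d} ≤ #A := by
  by_cases hc : c = 0
  · refine (card_le_card_of_injOn Prod.fst (fun _ _ => mem_univ _)
      fun p hp q hq hpq => Prod.ext hpq (Subtype.ext ?_)).trans (by simp)
    simp only [mem_coe, mem_filter, mem_univ, true_and, hc, zero_mul, sub_zero] at hp hq
    rw [hp, hq]
  · refine (card_le_card_of_injOn Prod.snd (fun _ _ => mem_univ _)
      fun p hp q hq hpq => Prod.ext (Subtype.ext ?_) hpq).trans (by simp)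
    simp only [mem_coe, mem_filter, mem_univ, true_and] at hp hq
    rw [hpq] at hp
    exact mul_left_cancel₀ hc (by linarith)

theorem slopes_shear_subset (hM : ∀ u ∈ A - A, ∀ v ∈ A - A, v ≠ 0 → u + M * v ≠ 0) :
    slopes (fun ab : A × A => (ab.1 : ℝ) + M * ab.2) (fun ab => (ab.2 : ℝ)) ⊆
      insert 0 ((insert 0 (posDiffs A / posDiffs A ∪ -(posDiffs A / posDiffs A))).image
        fun t => (t + M)⁻¹) := by
  intro s hs
  obtain ⟨⟨p, q⟩, hpq, rfl⟩ := mem_image.1 hs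
  by_cases hv : (p.2 : ℝ) - q.2 = 0
  · simp [hv]
  refine mem_insert_of_mem (mem_image.2 ⟨_, div_mem_of_mem_sub_self
    (sub_mem_sub p.1.2 q.1.2) (sub_mem_sub p.2.2 q.2.2) hv, ?_⟩)
  have hden := sub_ne_zero.2 ((injective_shear hM).ne (mem_offDiag.1 hpq).2.2)
  rw [show (p.1 : ℝ) + M * p.2 - (q.1 + M * q.2) = p.1 - q.1 + M * (p.2 - q.2) by ring] at hden ⊢
  field_simp

end Shear

theorem sq_card_le_four_mul_card_div_add (A : Finset ℝ) :
    #A ^ 2 ≤ 4 * #(posDiffs A / posDiffs A) + #A + 5 := by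
  classical
  obtain ⟨M, hM⟩ := exists_forall_add_mul_ne_zero (A - A)
  have hslopes := card_le_card (slopes_shear_subset hM)
  set Q := posDiffs A / posDiffs A
  have := card_insert_le 0 ((insert 0 (Q ∪ -Q)).image fun t => (t + M)⁻¹)
  have := card_image_le (s := insert 0 (Q ∪ -Q)) (f := fun t => (t + M)⁻¹)
  have := card_insert_le 0 (Q ∪ -Q)
  have := card_union_le Q (-Q)
  rw [card_neg] at this
  calc #A ^ 2 = Fintype.card (A × A) := by simp [sq]
    _ ≤ 2 * #(slopes (fun ab : A × A => (ab.1 : ℝ) + M * ab.2) (fun ab => (ab.2 : ℝ))) + #A + 1 :=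
        card_le_two_mul_card_slopes_add (injective_shear hM) (card_filter_shear_eq_le A M)
    _ ≤ 4 * #Q + #A + 5 := by omega

theorem mul_add_mul_mem_Ioo {l l' a b e e' : ℝ} (hl : l < l') (ha : 0 < a) (hb : 0 < b)
    (he : 0 < e) (he' : 0 < e') :
    a * (l * e) + b * (l' * e') ∈ Set.Ioo (l * (a * e + b * e')) (l' * (a * e + b * e')) := by
  constructor <;> nlinarith [mul_pos (mul_pos hb he') (sub_pos.2 hl),
    mul_pos (mul_pos ha he) (sub_pos.2 hl)]

theorem eq_and_eq_of_add_mul_eq {l l' a b c d e e' : ℝ} (hl : l ≠ l') (he : e ≠ 0) (he' : e' ≠ 0)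
    (h₁ : a * e + b * e' = c * e + d * e')
    (h₂ : a * (l * e) + b * (l' * e') = c * (l * e) + d * (l' * e')) : a = c ∧ b = d := by
  have hbd : (b - d) * e' * (l' - l) = 0 := by linear_combination h₂ - l * h₁
  simp only [mul_eq_zero, sub_eq_zero, he', hl.symm, or_false] at hbd
  subst hbd
  exact ⟨mul_right_cancel₀ he (by linarith), rfl⟩

theorem eq_of_add_mul_eq_add_mul {m : ℕ} {σ e : Fin (m + 1) → ℝ} (hσ : StrictMono σ)
    (he : ∀ k, 0 < e k) {k k' : Fin m} {a b a' b' : ℝ} (ha : 0 < a) (hb : 0 < b) (ha' : 0 < a')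
    (hb' : 0 < b') (hX : a * e k.castSucc + b * e k.succ = a' * e k'.castSucc + b' * e k'.succ)
    (hY : a * (σ k.castSucc * e k.castSucc) + b * (σ k.succ * e k.succ) =
      a' * (σ k'.castSucc * e k'.castSucc) + b' * (σ k'.succ * e k'.succ)) :
    k = k' ∧ a = a' ∧ b = b' := by
  have hsector := mul_add_mul_mem_Ioo (hσ (Fin.castSucc_lt_succ (i := k))) ha hb
    (he k.castSucc) (he k.succ)
  have hsector' := mul_add_mul_mem_Ioo (hσ (Fin.castSucc_lt_succ (i := k'))) ha' hb'
    (he k'.castSucc) (he k'.succ)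
  rw [← hX, ← hY] at hsector'
  have hXpos : 0 < a * e k.castSucc + b * e k.succ := by
    have := he k.castSucc
    have := he k.succ
    positivity
  have hdisj : ∀ {k k' : Fin m} {X Y : ℝ}, k < k' → 0 < X → Y < σ k.succ * X →
      σ k'.castSucc * X < Y → False := fun hkk' hX h h' => by
    nlinarith [mul_le_mul_of_nonneg_right (hσ.monotone (Fin.succ_le_castSucc_iff.2 hkk')) hX.le]
  obtain rfl : k = k' := by
    rcases lt_trichotomy k k' with hkk' | hkk' | hkk'
    · exact (hdisj hkk' hXpos hsector.2 hsector'.1).elim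
    · exact hkk'
    · exact (hdisj hkk' hXpos hsector'.2 hsector.1).elim
  exact ⟨rfl, eq_and_eq_of_add_mul_eq (hσ Fin.castSucc_lt_succ).ne (he _).ne' (he _).ne' hX hY⟩

/-- Solymosi's argument: with `σ₀ < ⋯ < σₘ` the ratios in `P / P`, the sums of a vector on the
line of slope `σₖ` and one on the line of slope `σₖ₊₁`, both with coordinates in `P * P`, lie
strictly inside the sector between these lines and determine their summands. -/
theorem card_div_sub_one_mul_sq_le {P : Finset ℝ} (hP : ∀ x ∈ P, 0 < x) :
    (#(P / P) - 1) * #P ^ 2 ≤ #(P * P + P * P) ^ 2 := by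
  classical
  obtain hQ | ⟨m, hm⟩ : #(P / P) = 0 ∨ ∃ m, #(P / P) = m + 1 :=
    (#(P / P)).eq_zero_or_eq_succ_pred.imp id fun h => ⟨_, h⟩
  · simp [hQ]
  set σ := (P / P).orderEmbOfFin hm
  have hrep : ∀ k, ∃ f ∈ P, ∃ e ∈ P, f / e = σ k := fun k => mem_div.1 (orderEmbOfFin_mem _ _ k)
  choose f hf e he hfe using hrep
  have hfσ : ∀ k, f k = σ k * e k := fun k => by
    rw [← hfe k, div_mul_cancel₀ _ (hP _ (he k)).ne']
  calc (#(P / P) - 1) * #P ^ 2 = #((univ : Finset (Fin m)) ×ˢ P ×ˢ P) := by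
        simp [hm, card_product, sq]
    _ ≤ #((P * P + P * P) ×ˢ (P * P + P * P)) := by
        refine card_le_card_of_injOn
          (fun kab => (kab.2.1 * e kab.1.castSucc + kab.2.2 * e kab.1.succ,
            kab.2.1 * f kab.1.castSucc + kab.2.2 * f kab.1.succ))
          (fun kab hkab => ?_) fun ⟨k, a, b⟩ hkab ⟨k', a', b'⟩ hkab' hΦ => ?_
        · simp only [coe_product, Set.mem_prod, mem_coe] at hkab ⊢
          exact ⟨add_mem_add (mul_mem_mul hkab.2.1 (he _)) (mul_mem_mul hkab.2.2 (he _)),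
            add_mem_add (mul_mem_mul hkab.2.1 (hf _)) (mul_mem_mul hkab.2.2 (hf _))⟩
        simp only [coe_product, Set.mem_prod, mem_coe] at hkab hkab'
        simp only [Prod.mk.injEq, hfσ] at hΦ
        obtain ⟨rfl, rfl, rfl⟩ := eq_of_add_mul_eq_add_mul σ.strictMono (fun k => hP _ (he k))
          (hP _ hkab.2.1) (hP _ hkab.2.2) (hP _ hkab'.2.1) (hP _ hkab'.2.2) hΦ.1 hΦ.2
        rfl
    _ = #(P * P + P * P) ^ 2 := by rw [card_product, sq]

theorem card_le_card_mul_self {s : Finset ℝ} {a : ℝ} (ha : a ∈ s) (ha₀ : a ≠ 0) :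
    #s ≤ #(s * s) :=
  card_le_card_of_injOn (a * ·) (fun _ hx => mul_mem_mul ha hx)
    fun _ _ _ _ h => mul_left_cancel₀ ha₀ h

theorem mul_le_twelve_mul_of_sq_le {n q p d s : ℕ} (hq : n ^ 2 ≤ 4 * q + n + 5)
    (hs : (q - 1) * p ^ 2 ≤ s ^ 2) (hd : d ≤ 2 * p + 1) (hp : 1 ≤ p) (hds : d ≤ s) :
    n * d ≤ 12 * s := by
  rcases le_or_gt n 12 with hn | hn
  · exact Nat.mul_le_mul hn hds
  have h13 : 13 * n ≤ n ^ 2 := by rw [sq]; exact Nat.mul_le_mul_right _ hn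
  refine (Nat.pow_le_pow_iff_left two_ne_zero).1 ?_
  calc (n * d) ^ 2 ≤ 16 * (q - 1) * (3 * p) ^ 2 := by
        rw [mul_pow]
        exact Nat.mul_le_mul (by omega) (Nat.pow_le_pow_left (by omega) 2)
    _ ≤ (12 * s) ^ 2 := by nlinarith

end

/-- There is an absolute constant `c > 0` such that for every finite set `A` of reals
with `|A| ≥ 2` and `D = A - A`, `|D·D + D·D| ≥ c * |D| * |A|`. -/
theorem stmt_15 :
    ∃ c : ℝ, 0 < c ∧ ∀ A : Finset ℝ, 2 ≤ A.card →
      c * (((A - A).card : ℝ)) * (A.card : ℝ)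
        ≤ ((((A - A) * (A - A)) + ((A - A) * (A - A))).card : ℝ) := by
  refine ⟨1 / 12, by norm_num, fun A hA => ?_⟩
  set D := A - A
  set P := posDiffs A
  obtain ⟨a, ha, b, hb, hab⟩ := one_lt_card.1 hA
  have hd₀ : a - b ∈ D := sub_mem_sub ha hb
  have hP : 1 ≤ #P := card_pos.2 ⟨_, abs_mem_posDiffs hd₀ (sub_ne_zero.2 hab)⟩
  have hDP : #D ≤ 2 * #P + 1 := card_sub_self_le A
  have hDS : #D ≤ #(D * D + D * D) := (card_le_card_mul_self hd₀ (sub_ne_zero.2 hab)).trans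
    (card_le_card_add_left ⟨_, mul_mem_mul hd₀ hd₀⟩)
  have hgrid : #A ^ 2 ≤ 4 * #(P / P) + #A + 5 := sq_card_le_four_mul_card_div_add A
  have hPD : P * P + P * P ⊆ D * D + D * D := by
    have hPD : P ⊆ D := filter_subset _ _
    exact add_subset_add (mul_subset_mul hPD hPD) (mul_subset_mul hPD hPD)
  have hsector : (#(P / P) - 1) * #P ^ 2 ≤ #(D * D + D * D) ^ 2 :=
    (card_div_sub_one_mul_sq_le fun x hx => (mem_filter.1 hx).2).trans
      (Nat.pow_le_pow_left (card_le_card hPD) 2)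
  have : #A * #D ≤ 12 * #(D * D + D * D) :=
    mul_le_twelve_mul_of_sq_le hgrid hsector hDP hP hDS
  have : (#A : ℝ) * #D ≤ 12 * #(D * D + D * D) := by exact_mod_cast this
  linarith
end

section
/- Let S be a finite subset of ℝ² contained in the open first quadrant, and suppose S is covered by L ≥ 2 distinct lines through the origin each containing at least n ≥ 1 points of S. If p1, q1 lie on lines l1 < l1' adjacent in slope order and p2, q2 lie on lines l2 < l2' adjacent in slope order with {l1, l1'} ≠ {l2, l2'}, then p1 + q1 ≠ p2 + q2. -/
open scoped Pointwise

/-- Sums of points on distinct adjacent pairs of lines are distinct: if `S` lies in the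
open first quadrant and is covered by `L ≥ 2` lines through the origin (given by their
slopes `M`), each containing at least `n ≥ 1` points of `S`, and `p1, q1` lie on an
adjacent pair `l1 < l1'` while `p2, q2` lie on an adjacent pair `l2 < l2'` with
`(l1, l1') ≠ (l2, l2')`, then `p1 + q1 ≠ p2 + q2`. -/
theorem stmt_17 (S : Finset (ℝ × ℝ)) (M : Finset ℝ) (n : ℕ)
    (hquad : ∀ p ∈ S, 0 < p.1 ∧ 0 < p.2)
    (hpos : ∀ m ∈ M, 0 < m)
    (hL : 2 ≤ M.card) (hn : 1 ≤ n)
    (hcover : ∀ p ∈ S, ∃ m ∈ M, p.2 = m * p.1)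
    (hrich : ∀ m ∈ M, n ≤ (S.filter (fun p => p.2 = m * p.1)).card)
    (l1 l1' l2 l2' : ℝ)
    (hl1 : l1 ∈ M) (hl1' : l1' ∈ M) (hl2 : l2 ∈ M) (hl2' : l2' ∈ M)
    (h12 : l1 < l1') (hadj1 : ∀ m ∈ M, ¬(l1 < m ∧ m < l1'))
    (h34 : l2 < l2') (hadj2 : ∀ m ∈ M, ¬(l2 < m ∧ m < l2'))
    (hne : (l1, l1') ≠ (l2, l2'))
    (p1 q1 p2 q2 : ℝ × ℝ)
    (hp1 : p1 ∈ S) (hq1 : q1 ∈ S) (hp2 : p2 ∈ S) (hq2 : q2 ∈ S)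
    (hp1l : p1.2 = l1 * p1.1) (hq1l : q1.2 = l1' * q1.1)
    (hp2l : p2.2 = l2 * p2.1) (hq2l : q2.2 = l2' * q2.1) :
    p1 + q1 ≠ p2 + q2 := by
  intro heq
  have hx1 : 0 < p1.1 := (hquad p1 hp1).1
  have hx2 : 0 < q1.1 := (hquad q1 hq1).1
  have hx3 : 0 < p2.1 := (hquad p2 hp2).1
  have hx4 : 0 < q2.1 := (hquad q2 hq2).1
  have hX : p1.1 + q1.1 = p2.1 + q2.1 := congrArg Prod.fst heq
  have hY : p1.2 + q1.2 = p2.2 + q2.2 := congrArg Prod.snd heq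
  have h1lo : l1 * (p1.1 + q1.1) < p1.2 + q1.2 := by rw [hp1l, hq1l]; nlinarith
  have h1hi : p1.2 + q1.2 < l1' * (p1.1 + q1.1) := by rw [hp1l, hq1l]; nlinarith
  have h2lo : l2 * (p1.1 + q1.1) < p1.2 + q1.2 := by
    rw [hX, hY, hp2l, hq2l]; nlinarith
  have h2hi : p1.2 + q1.2 < l2' * (p1.1 + q1.1) := by
    rw [hX, hY, hp2l, hq2l]; nlinarith
  rcases lt_trichotomy l1 l2 with h | h | h
  · have := hadj1 l2 hl2
    have hle : l1' ≤ l2 := by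
      by_contra hlt
      exact this ⟨h, lt_of_not_ge hlt⟩
    nlinarith
  · -- l1 = l2, show l1' = l2' to contradict hne
    have ha : ¬ (l2 < l1' ∧ l1' < l2') := hadj2 l1' hl1'
    have hb : ¬ (l1 < l2' ∧ l2' < l1') := hadj1 l2' hl2'
    have h1 : l2 < l1' := h ▸ h12
    have h2 : l1 < l2' := h.symm ▸ h34
    have : l1' = l2' := le_antisymm (le_of_not_gt fun hlt => hb ⟨h2, hlt⟩)
      (le_of_not_gt fun hlt => ha ⟨h1, hlt⟩)
    exact hne (by rw [h, this])
  · have := hadj2 l1 hl1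
    have hle : l2' ≤ l1 := by
      by_contra hlt
      exact this ⟨h, lt_of_not_ge hlt⟩
    nlinarith
end

section
/- Let D be a finite symmetric subset of ℝ (D = -D) with 0 ∈ D and |D| ≥ 3. Then the set 4D² - 4D² = {x1+x2+x3+x4-x5-x6-x7-x8 : xi ∈ D²} contains the dilate 2·(D·D + D·D). -/
/-!
If `d₁ = a₂ - a₁` and `d₂ = b₁ - b₂` are differences of elements of `A`, then
`2 d₁ d₂ = (b₁ - a₁)² + (b₂ - a₂)² - (b₁ - a₂)² - (b₂ - a₁)²`, and all four differences on the
right lie in `A - A`. Hence `2·(D·D) ⊆ 2D² - 2D²` for `D = A - A`, and adding two copies gives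
`2·(D·D + D·D) ⊆ 4D² - 4D²`.
-/

open scoped Pointwise

namespace Finset

variable {R : Type*} [CommRing R] [DecidableEq R]

theorem two_smul_mul_sub_self_subset (A : Finset R) :
    (2 : R) • ((A - A) * (A - A)) ⊆
      (A - A).image (· ^ 2) + (A - A).image (· ^ 2)
        - ((A - A).image (· ^ 2) + (A - A).image (· ^ 2)) := by
  intro t ht
  obtain ⟨_, hd, rfl⟩ := mem_smul_finset.1 ht
  obtain ⟨_, hd₁, _, hd₂, rfl⟩ := mem_mul.1 hd
  obtain ⟨a₂, ha₂, a₁, ha₁, rfl⟩ := mem_sub.1 hd₁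
  obtain ⟨b₁, hb₁, b₂, hb₂, rfl⟩ := mem_sub.1 hd₂
  have sq_mem {x y : R} (hx : x ∈ A) (hy : y ∈ A) : (x - y) ^ 2 ∈ (A - A).image (· ^ 2) :=
    mem_image_of_mem _ (sub_mem_sub hx hy)
  have key : (2 : R) • ((a₂ - a₁) * (b₁ - b₂)) =
      (b₁ - a₁) ^ 2 + (b₂ - a₂) ^ 2 - ((b₁ - a₂) ^ 2 + (b₂ - a₁) ^ 2) := by
    rw [smul_eq_mul]; ring
  rw [key]
  exact sub_mem_sub (add_mem_add (sq_mem hb₁ ha₁) (sq_mem hb₂ ha₂))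
    (add_mem_add (sq_mem hb₁ ha₂) (sq_mem hb₂ ha₁))

end Finset

theorem stmt_18_general (D : Finset ℝ) (hdiff : ∃ A : Finset ℝ, D = A - A) :
    (2 : ℝ) • (D * D + D * D) ⊆
      (D.image (· ^ 2) + D.image (· ^ 2) + D.image (· ^ 2) + D.image (· ^ 2))
        - (D.image (· ^ 2) + D.image (· ^ 2) + D.image (· ^ 2) + D.image (· ^ 2)) := by
  obtain ⟨A, rfl⟩ := hdiff
  set S := (A - A).image (· ^ 2)
  calc (2 : ℝ) • ((A - A) * (A - A) + (A - A) * (A - A))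
      = (2 : ℝ) • ((A - A) * (A - A)) + (2 : ℝ) • ((A - A) * (A - A)) := smul_add _ _ _
    _ ⊆ (S + S - (S + S)) + (S + S - (S + S)) :=
      Finset.add_subset_add A.two_smul_mul_sub_self_subset A.two_smul_mul_sub_self_subset
    _ = S + S + S + S - (S + S + S + S) := by
      rw [← add_sub_add_comm, ← add_assoc]

/-- Let `D` be a finite symmetric subset of `ℝ` with `0 ∈ D` and `|D| ≥ 3`, arising as
a difference set `D = A - A`. Then `4D² - 4D²` contains the dilate
`2 • (D·D + D·D)`. -/
theorem stmt_18 (D : Finset ℝ) (hsymm : D = -D) (h0 : (0 : ℝ) ∈ D)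
    (hcard : 3 ≤ D.card) (hdiff : ∃ A : Finset ℝ, D = A - A) :
    (2 : ℝ) • (D * D + D * D) ⊆
      (D.image (· ^ 2) + D.image (· ^ 2) + D.image (· ^ 2) + D.image (· ^ 2))
        - (D.image (· ^ 2) + D.image (· ^ 2) + D.image (· ^ 2) + D.image (· ^ 2)) :=
  stmt_18_general D hdiff
end
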